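/- arXiv:2203.03808 — 12 statements merged into one kernel-verified Lean document; each statement's English description precedes it below -/
import Mathlib

section
/- Every minimizer x⋆ of f over the nonnegative orthant satisfies f(x⋆) = −(1/2)‖Ax⋆‖₂² = −(1/2)𝟙ᵀx⋆. -/
open Finset

/-- Every minimizer `x⋆` of `f(x) = (1/2)‖Ax‖² − 𝟙ᵀx` over the nonnegative orthant satisfies
`f(x⋆) = −(1/2)‖Ax⋆‖₂² = −(1/2)𝟙ᵀx⋆`. -/
theorem optval_at_min {m n : ℕ} (hm : 0 < m) (hn : 0 < n)
    (A : Matrix (Fin m) (Fin n) ℝ)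
    (hA_nonneg : ∀ i j, 0 ≤ A i j)
    (hA_cols : ∀ j, ∃ i, A i j ≠ 0)
    (f : (Fin n → ℝ) → ℝ)
    (hf : ∀ x, f x = (1/2) * ∑ i, (A.mulVec x i)^2 - ∑ j, x j)
    (xstar : Fin n → ℝ)
    (hxs_nonneg : ∀ j, 0 ≤ xstar j)
    (hxs_min : ∀ x : Fin n → ℝ, (∀ j, 0 ≤ x j) → f xstar ≤ f x) :
    f xstar = -(1/2) * ∑ i, (A.mulVec xstar i)^2 ∧
    f xstar = -(1/2) * ∑ j, xstar j := by
  set S : ℝ := ∑ i, (A.mulVec xstar i)^2 with hS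
  set T : ℝ := ∑ j, xstar j with hT
  have hS0 : 0 ≤ S := Finset.sum_nonneg fun i _ => sq_nonneg _
  have hT0 : 0 ≤ T := Finset.sum_nonneg fun j _ => hxs_nonneg j
  have hft : ∀ t : ℝ, f (t • xstar) = 1/2 * (t^2 * S) - t * T := by
    intro t
    rw [hf]
    have h1 : ∀ i, A.mulVec (t • xstar) i = t * A.mulVec xstar i := by
      intro i
      rw [Matrix.mulVec_smul]
      rfl
    have h2 : ∑ i, (A.mulVec (t • xstar) i)^2 = t^2 * S := by
      rw [hS, Finset.mul_sum]
      exact Finset.sum_congr rfl fun i _ => by rw [h1]; ring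
    have h3 : ∑ j, (t • xstar) j = t * T := by
      rw [hT, Finset.mul_sum]
      exact Finset.sum_congr rfl fun j _ => rfl
    rw [h2, h3]
  have hmin : ∀ t : ℝ, 0 ≤ t → 1/2 * S - T ≤ 1/2 * (t^2 * S) - t * T := by
    intro t ht
    have := hxs_min (t • xstar) (fun j => mul_nonneg ht (hxs_nonneg j))
    rw [hft t, hf xstar] at this
    linarith [this]
  have hST : S = T := by
    by_contra hne
    rcases lt_or_gt_of_ne hne with hlt | hgt
    · -- S < T
      have hSpos : 0 < S := by
        rcases eq_or_lt_of_le hS0 with h0 | h0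
        · exfalso
          have := hmin 2 (by norm_num)
          have := hmin 0 (by norm_num)
          nlinarith
        · exact h0
      set d : ℝ := (T - S) / S with hd
      have hdpos : 0 < d := div_pos (by linarith) hSpos
      have hdS : d * S = T - S := div_mul_cancel₀ _ (ne_of_gt hSpos)
      have := hmin (1 + d) (by linarith)
      nlinarith
    · -- T < S
      have hSpos : 0 < S := lt_of_le_of_lt hT0 hgt
      set d : ℝ := min 1 ((S - T) / S) with hd
      have hdpos : 0 < d := lt_min one_pos (div_pos (by linarith) hSpos)
      have hd1 : d ≤ 1 := min_le_left _ _
      have hd2 : d ≤ (S - T) / S := min_le_right _ _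
      have hdS : d * S ≤ S - T := by
        rw [← div_mul_cancel₀ (S - T) (ne_of_gt hSpos)]
        exact mul_le_mul_of_nonneg_right hd2 (le_of_lt hSpos)
      have := hmin (1 - d) (by linarith)
      nlinarith
  constructor
  · rw [hf xstar, ← hS, ← hT, hST]; ring
  · rw [hf xstar, ← hS, ← hT, hST]; ring
end

section
/- Every minimizer x⋆ of f over the nonnegative orthant satisfies, for every coordinate j ∈ {1,…,n}, 0 ≤ x⋆_j ≤ 1/‖A_{:j}‖₂². -/
open Finset

/-- Every minimizer `x⋆` of `f(x) = (1/2)‖Ax‖² − 𝟙ᵀx` over the nonnegative orthant satisfies,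
for every coordinate `j`, `0 ≤ x⋆_j ≤ 1/‖A_{:j}‖₂²`. -/
theorem min_in_box {m n : ℕ} (hm : 0 < m) (hn : 0 < n)
    (A : Matrix (Fin m) (Fin n) ℝ)
    (hA_nonneg : ∀ i j, 0 ≤ A i j)
    (hA_cols : ∀ j, ∃ i, A i j ≠ 0)
    (f : (Fin n → ℝ) → ℝ)
    (hf : ∀ x, f x = (1/2) * ∑ i, (A.mulVec x i)^2 - ∑ j, x j)
    (xstar : Fin n → ℝ)
    (hxs_nonneg : ∀ j, 0 ≤ xstar j)
    (hxs_min : ∀ x : Fin n → ℝ, (∀ j, 0 ≤ x j) → f xstar ≤ f x) :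
    ∀ j, 0 ≤ xstar j ∧ xstar j ≤ 1 / ∑ i, (A i j)^2 := by
  intro j
  refine ⟨hxs_nonneg j, ?_⟩
  set a := ∑ i, (A i j)^2 with ha
  have ha_pos : 0 < a := by
    obtain ⟨i, hi⟩ := hA_cols j
    exact Finset.sum_pos' (fun i _ => sq_nonneg _)
      ⟨i, Finset.mem_univ i, by positivity⟩
  set S := ∑ i, A.mulVec xstar i * A i j with hS
  have hSa : a * xstar j ≤ S := by
    rw [ha, Finset.sum_mul]
    apply Finset.sum_le_sum
    intro i _
    have h1 : A i j * xstar j ≤ A.mulVec xstar i := by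
      have := Finset.single_le_sum
        (f := fun k => A i k * xstar k)
        (fun k _ => mul_nonneg (hA_nonneg i k) (hxs_nonneg k)) (Finset.mem_univ j)
      simpa [Matrix.mulVec, dotProduct] using this
    calc (A i j)^2 * xstar j = (A i j * xstar j) * A i j := by ring
      _ ≤ A.mulVec xstar i * A i j := mul_le_mul_of_nonneg_right h1 (hA_nonneg i j)
  have key : ∀ t : ℝ, 0 ≤ xstar j + t → 0 ≤ t * (S - 1) + t^2 * a / 2 := by
    intro t ht
    set x : Fin n → ℝ := fun k => xstar k + if k = j then t else 0 with hx
    have hx_nonneg : ∀ k, 0 ≤ x k := by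
      intro k
      by_cases hk : k = j
      · subst hk; simpa [hx] using ht
      · simpa [hx, hk] using hxs_nonneg k
    have hmain := hxs_min x hx_nonneg
    rw [hf, hf] at hmain
    have hmv : ∀ i, A.mulVec x i = A.mulVec xstar i + A i j * t := by
      intro i
      simp [Matrix.mulVec, dotProduct, hx, mul_add, Finset.sum_add_distrib,
        mul_ite, mul_zero, Finset.sum_ite_eq']
    have hsum : ∑ k, x k = (∑ k, xstar k) + t := by
      simp [hx, Finset.sum_add_distrib]
    have hsq : ∑ i, (A.mulVec x i)^2
        = (∑ i, (A.mulVec xstar i)^2) + 2 * t * S + t^2 * a := by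
      simp_rw [hmv]
      rw [hS, ha, Finset.mul_sum, Finset.mul_sum, ← Finset.sum_add_distrib,
        ← Finset.sum_add_distrib]
      exact Finset.sum_congr rfl fun i _ => by ring
    rw [hsq, hsum] at hmain
    nlinarith [hmain]
  by_contra h
  push_neg at h
  have hx_pos : 0 < xstar j := lt_trans (by positivity) h
  have hg : 0 < S - 1 := by
    have : 1 < a * xstar j := by
      rw [div_lt_iff₀ ha_pos] at h
      linarith
    linarith
  set c := min (xstar j) ((S - 1) / a) with hc
  have hc_pos : 0 < c := lt_min hx_pos (by positivity)
  have hca : c * a ≤ S - 1 := by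
    have := min_le_right (xstar j) ((S - 1) / a)
    calc c * a ≤ ((S - 1) / a) * a := by nlinarith
      _ = S - 1 := by field_simp
  have ht1 : 0 ≤ xstar j + (-c) := by
    have := min_le_left (xstar j) ((S - 1) / a)
    linarith
  have hk := key (-c) ht1
  nlinarith [hk, hc_pos, hg]
end

section
/- For every x ∈ ℝⁿ₊, the natural residual satisfies r(x) = ‖R(x)‖_Λ ≤ √(2n·(f(x) − f(x⋆))), where x⋆ is any minimizer of f over ℝⁿ₊. -/
open Finset Matrix

/-!
Lowering the single coordinate `x_j` by the residual `R_j` stays feasible, since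
`x_j - R_j = max (x_j - g_j/λ_j) 0` with `g = ∇f(x)`. As `f` is quadratic along coordinate lines,
this move lowers `f` by `R_j g_j - λ_j R_j²/2`, and the projected Newton step satisfies
`λ_j R_j² ≤ R_j g_j`, so the decrease is at least `λ_j R_j²/2`. Hence `λ_j R_j² ≤ 2 (f(x) - f(x⋆))`
for every `j`, and summing over the `n` coordinates gives the bound.
-/

namespace NNLS

variable {ι κ : Type*} [Fintype ι]

def colNormSq (A : Matrix ι κ ℝ) (j : κ) : ℝ :=
  ∑ i, A i j ^ 2

theorem colNormSq_nonneg (A : Matrix ι κ ℝ) (j : κ) : 0 ≤ colNormSq A j :=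
  sum_nonneg fun _ _ => sq_nonneg _

variable [Fintype κ]

noncomputable def objective (A : Matrix ι κ ℝ) (x : κ → ℝ) : ℝ :=
  (1 / 2) * ∑ i, (A *ᵥ x) i ^ 2 - ∑ j, x j

def partialGrad (A : Matrix ι κ ℝ) (x : κ → ℝ) (j : κ) : ℝ :=
  ∑ i, A i j * (A *ᵥ x) i - 1

/-- The paper's `R(x) = x − max(x − Λ⁻¹∇f(x), 0)`; for a zero column, `g / 0 = 0` makes
`R_j(x) = 0` on the feasible set. -/
noncomputable def naturalResidual (A : Matrix ι κ ℝ) (x : κ → ℝ) (j : κ) : ℝ :=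
  x j - max (x j - partialGrad A x j / colNormSq A j) 0

theorem objective_sub_single [DecidableEq κ] (A : Matrix ι κ ℝ) (x : κ → ℝ) (j : κ) (t : ℝ) :
    objective A (x - Pi.single j t) =
      objective A x - t * partialGrad A x j + colNormSq A j * t ^ 2 / 2 := by
  have hcoord : ∀ i, (A *ᵥ (x - Pi.single j t)) i = (A *ᵥ x) i - t * A i j :=
    fun i => by simp [mulVec_sub]
  simp only [objective, partialGrad, colNormSq, hcoord, sum_sub_distrib, Pi.sub_apply,
    sum_pi_single']
  have hsq : ∀ i, ((A *ᵥ x) i - t * A i j) ^ 2 =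
      (A *ᵥ x) i ^ 2 - 2 * t * (A i j * (A *ᵥ x) i) + t ^ 2 * A i j ^ 2 := fun i => by ring
  simp only [hsq, sum_add_distrib, sum_sub_distrib, ← mul_sum, mem_univ, if_true]
  ring

theorem mul_sq_le_mul_of_eq_sub_max {lam x g r : ℝ} (hlam : 0 ≤ lam) (hx : 0 ≤ x)
    (hr : r = x - max (x - g / lam) 0) : lam * r ^ 2 ≤ r * g := by
  rcases hlam.eq_or_lt with rfl | hlam
  · simp only [div_zero, sub_zero, max_eq_left hx, sub_self] at hr
    simp [hr]
  rcases le_total 0 (x - g / lam) with hstep | hclip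
  · rw [max_eq_left hstep] at hr
    have : r = g / lam := by linarith
    rw [this, sq, ← mul_assoc, mul_div_cancel₀ g hlam.ne', mul_comm]
  · rw [max_eq_right hclip, sub_zero] at hr
    have : lam * x ≤ g := (le_div_iff₀' hlam).mp (by linarith)
    rw [hr]
    nlinarith

theorem colNormSq_mul_naturalResidual_sq_le [DecidableEq κ] (A : Matrix ι κ ℝ)
    {x xstar : κ → ℝ} (hxstar : ∀ y : κ → ℝ, (∀ j, 0 ≤ y j) → objective A xstar ≤ objective A y)
    (hx : ∀ j, 0 ≤ x j) (j : κ) :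
    colNormSq A j * naturalResidual A x j ^ 2 ≤ 2 * (objective A x - objective A xstar) := by
  set r := naturalResidual A x j
  have hfeasible : ∀ k, 0 ≤ (x - Pi.single j r : κ → ℝ) k := by
    intro k
    rcases eq_or_ne k j with rfl | hk
    · simp [r, naturalResidual]
    · simp [hk, hx k]
  have hdescent := hxstar _ hfeasible
  rw [objective_sub_single] at hdescent
  have hstep : colNormSq A j * r ^ 2 ≤ r * partialGrad A x j :=
    mul_sq_le_mul_of_eq_sub_max (colNormSq_nonneg A j) (hx j) rfl
  linarith

end NNLS

open NNLS

theorem residual_le_sqrt_gap_general {m n : ℕ}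
    (A : Matrix (Fin m) (Fin n) ℝ)
    (f : (Fin n → ℝ) → ℝ)
    (hf : ∀ x, f x = (1/2) * ∑ i, (A.mulVec x i)^2 - ∑ j, x j)
    (xstar : Fin n → ℝ)
    (hxs_min : ∀ x : Fin n → ℝ, (∀ j, 0 ≤ x j) → f xstar ≤ f x)
    (x : Fin n → ℝ) (hx : ∀ j, 0 ≤ x j)
    (R : Fin n → ℝ)
    (hR : ∀ j, R j = x j -
      max (x j - ((∑ i, A i j * A.mulVec x i) - 1) / (∑ i, (A i j)^2)) 0) :
    Real.sqrt (∑ j, (∑ i, (A i j)^2) * (R j)^2) ≤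
      Real.sqrt (2 * n * (f x - f xstar)) := by
  obtain rfl : f = objective A := funext hf
  obtain rfl : R = naturalResidual A x := funext hR
  apply Real.sqrt_le_sqrt
  calc ∑ j, colNormSq A j * naturalResidual A x j ^ 2
      ≤ ∑ _j : Fin n, 2 * (objective A x - objective A xstar) :=
        sum_le_sum fun j _ => colNormSq_mul_naturalResidual_sq_le A hxs_min hx j
    _ = 2 * n * (objective A x - objective A xstar) := by
        rw [sum_const, card_univ, Fintype.card_fin, nsmul_eq_mul]
        ring

/-- For every `x ∈ ℝⁿ₊`, the natural residual satisfies
`r(x) = ‖R(x)‖_Λ ≤ √(2n·(f(x) − f(x⋆)))`, where `x⋆` is any minimizer of `f` over `ℝⁿ₊`,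
`R(x) = x − max(x − Λ⁻¹∇f(x), 0)` and `‖v‖_Λ² = Σ_j ‖A_{:j}‖₂² v_j²`. -/
theorem residual_le_sqrt_gap {m n : ℕ} (hm : 0 < m) (hn : 0 < n)
    (A : Matrix (Fin m) (Fin n) ℝ)
    (hA_nonneg : ∀ i j, 0 ≤ A i j)
    (hA_cols : ∀ j, ∃ i, A i j ≠ 0)
    (f : (Fin n → ℝ) → ℝ)
    (hf : ∀ x, f x = (1/2) * ∑ i, (A.mulVec x i)^2 - ∑ j, x j)
    (xstar : Fin n → ℝ)
    (hxs_nonneg : ∀ j, 0 ≤ xstar j)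
    (hxs_min : ∀ x : Fin n → ℝ, (∀ j, 0 ≤ x j) → f xstar ≤ f x)
    (x : Fin n → ℝ) (hx : ∀ j, 0 ≤ x j)
    (R : Fin n → ℝ)
    (hR : ∀ j, R j = x j -
      max (x j - ((∑ i, A i j * A.mulVec x i) - 1) / (∑ i, (A i j)^2)) 0) :
    Real.sqrt (∑ j, (∑ i, (A i j)^2) * (R j)^2) ≤
      Real.sqrt (2 * n * (f x - f xstar)) :=
  residual_le_sqrt_gap_general A f hf xstar hxs_min x hx R hR
end

section
/- For every k ≥ 2 it holds that a_{k+1} ≥ a_k, and for every k ≥ 0 it holds that A_{k+1} > A_k. -/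
/-- For the step-size sequences of SI-NNLS+: for every `k ≥ 2`, `a_{k+1} ≥ a_k`, and for every
`k ≥ 0`, `A_{k+1} > A_k`. -/
theorem seq_monotone (n : ℕ) (hn : 4 ≤ n)
    (a A : ℕ → ℝ)
    (ha1 : a 1 = 1 / (Real.sqrt 2 * (n : ℝ) ^ ((3:ℝ)/2)))
    (ha2 : a 2 = a 1 / ((n : ℝ) - 1))
    (hA0 : A 0 = 0)
    (hArec : ∀ k, A (k+1) = A k + a (k+1))
    (harec : ∀ k, 1 ≤ k →
      a (k+2) = min ((n : ℝ) * a (k+1) / ((n : ℝ) - 1)) (Real.sqrt (A (k+1)) / (2 * n))) :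
    (∀ k, 2 ≤ k → a k ≤ a (k+1)) ∧ (∀ k, A k < A (k+1)) := by
  have hn4 : (4:ℝ) ≤ (n:ℝ) := by exact_mod_cast hn
  have hnpos : (0:ℝ) < n := by linarith
  have hn1pos : (0:ℝ) < (n:ℝ) - 1 := by linarith
  have h8 : (8:ℝ) ≤ Real.sqrt 2 * (n:ℝ) ^ ((3:ℝ)/2) := by
    have h1 : (1:ℝ) ≤ Real.sqrt 2 := by
      rw [show (1:ℝ) = Real.sqrt 1 from (Real.sqrt_one).symm]
      exact Real.sqrt_le_sqrt (by norm_num)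
    have h2 : (8:ℝ) ≤ (n:ℝ) ^ ((3:ℝ)/2) := by
      have hle : (4:ℝ) ^ ((3:ℝ)/2) ≤ (n:ℝ)^((3:ℝ)/2) :=
        Real.rpow_le_rpow (by norm_num) hn4 (by norm_num)
      have h4 : (4:ℝ) ^ ((3:ℝ)/2) = 8 := by
        rw [show (4:ℝ) = (2:ℝ)^(2:ℕ) by norm_num, ← Real.rpow_natCast (2:ℝ) 2,
          ← Real.rpow_mul (by norm_num)]
        rw [show ((2:ℕ):ℝ) * ((3:ℝ)/2) = ((3:ℕ):ℝ) by push_cast; ring, Real.rpow_natCast]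
        norm_num
      linarith
    nlinarith
  have ha1pos : 0 < a 1 := by
    rw [ha1]; exact div_pos one_pos (by linarith)
  have ha1le : a 1 ≤ 1/8 := by
    rw [ha1]
    exact one_div_le_one_div_of_le (by norm_num) h8
  have hA1 : A 1 = a 1 := by rw [hArec 0, hA0, zero_add]
  have ha2pos : 0 < a 2 := by rw [ha2]; exact div_pos ha1pos hn1pos
  have hA2 : A 2 = a 1 + a 2 := by rw [hArec 1, hA1]
  have key : ∀ k, 1 ≤ k →
      0 < a (k+1) ∧ 0 < A (k+1) ∧ 2*(n:ℝ)*a (k+1) ≤ Real.sqrt (A (k+1)) := by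
    intro k hk
    induction k, hk using Nat.le_induction with
    | base =>
      have hA2pos : 0 < A 2 := by rw [hA2]; linarith
      refine ⟨ha2pos, hA2pos, ?_⟩
      show 2*(n:ℝ)*a 2 ≤ Real.sqrt (A 2)
      rw [Real.le_sqrt' (by positivity), hA2]
      have e1 : a 2 * ((n:ℝ)-1) = a 1 := by
        rw [ha2]; exact div_mul_cancel₀ _ hn1pos.ne'
      have key2 : 4*(n:ℝ)*a 1 ≤ (n:ℝ) - 1 := by nlinarith
      have h4 : 4*(n:ℝ)*a 2 ≤ 1 := by nlinarith [key2, e1, hn1pos, ha2pos]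
      nlinarith [h4, mul_pos hnpos ha2pos, e1]
    | succ k hk ih =>
      obtain ⟨hapos, hApos, hbound⟩ := ih
      have hrec := harec k hk
      have hmin1 : 0 < (n:ℝ) * a (k+1) / ((n:ℝ) - 1) := by positivity
      have hsq : 0 < Real.sqrt (A (k+1)) := Real.sqrt_pos.mpr hApos
      have hmin2 : 0 < Real.sqrt (A (k+1)) / (2*(n:ℝ)) := by positivity
      have hap : 0 < a (k+2) := by rw [hrec]; exact lt_min hmin1 hmin2
      have hAp : 0 < A (k+2) := by rw [hArec (k+1)]; linarith
      refine ⟨hap, hAp, ?_⟩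
      have h1 : a (k+2) ≤ Real.sqrt (A (k+1)) / (2*(n:ℝ)) := by
        rw [hrec]; exact min_le_right _ _
      have h2 : 2*(n:ℝ)*a (k+2) ≤ Real.sqrt (A (k+1)) := by
        rw [div_eq_inv_mul] at h1
        calc 2*(n:ℝ)*a (k+2) ≤ 2*(n:ℝ)*((2*(n:ℝ))⁻¹ * Real.sqrt (A (k+1))) := by
              apply mul_le_mul_of_nonneg_left h1 (by positivity)
          _ = Real.sqrt (A (k+1)) := by field_simp
      have h3 : Real.sqrt (A (k+1)) ≤ Real.sqrt (A (k+2)) := by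
        apply Real.sqrt_le_sqrt
        rw [hArec (k+1)]; linarith
      linarith
  constructor
  · intro k hk
    obtain ⟨m, rfl⟩ : ∃ m, k = m + 2 := ⟨k - 2, by omega⟩
    obtain ⟨hapos, hApos, hbound⟩ := key (m+1) (by omega)
    have hrec := harec (m+1) (by omega)
    rw [hrec]
    refine le_min ?_ ?_
    · rw [le_div_iff₀ hn1pos]
      nlinarith
    · rw [le_div_iff₀ (by positivity)]
      linarith
  · intro k
    rw [hArec k]
    have : 0 < a (k+1) := by
      match k with
      | 0 => exact ha1pos
      | (m+1) => exact (key (m+1) (by omega)).1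
    linarith
end

section
/- Let k ≥ 1 and let s_1 < s_2 < … < s_k be Type II indices (so each s_i ≥ 2 and a_{s_i+1} = √(A_{s_i})/(2n)). Then A_{s_k} ≥ k²/(36·n²) and a_{s_k} ≥ (k−1)/(12·n²). -/
/-!
The sequence is positive, so `A` is nondecreasing. Since `a₁² = 1/(2n³)` and `n ≥ 4`, we have
`a₁ ≤ ((n-1)/(2n))²`, which gives `a₂ = a₁/(n-1) ≤ √A₂/(2n)`; the recurrence propagates
`a_m ≤ √A_m/(2n)` to all `m ≥ 2`, and then both branches of the `min` dominate `a_m`, so `a` is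
nondecreasing from index `2` on. At a Type II index `s` we have `A_{s+1} = A_s + √A_s/(2n)`, and
`(c/(6n))² ≤ x` implies `((c+1)/(6n))² ≤ x + √x/(2n)` for `c ≥ 1`; this carries
`A_{s_i} ≥ (i/(6n))²` from one Type II index to the next, starting from `A_{s_1} ≥ a₁ ≥ 1/(36n²)`.
Finally `a_{s_k} ≥ a_{s_{k-1}+1} = √A_{s_{k-1}}/(2n) ≥ (k-1)/(12n²)`.
-/

open Real

lemma sq_sqrt_two_mul_rpow_three_halves {N : ℝ} (hN : 0 ≤ N) :
    (√2 * N ^ ((3 : ℝ) / 2)) ^ 2 = 2 * N ^ 3 := by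
  rw [mul_pow, sq_sqrt zero_le_two, ← rpow_natCast (N ^ _), ← rpow_mul hN]
  norm_num

lemma one_div_six_mul_sq_le_of_sq_eq {x N : ℝ} (hN : 1 ≤ N) (hx : 0 ≤ x)
    (hx2 : x ^ 2 = 1 / (2 * N ^ 3)) : (1 / (6 * N)) ^ 2 ≤ x := by
  rw [← pow_le_pow_iff_left₀ (by positivity) hx two_ne_zero, hx2, ← pow_mul, div_pow, one_pow]
  gcongr
  calc 2 * N ^ 3 ≤ 1296 * N ^ 4 := by
        nlinarith [pow_le_pow_right₀ hN (show 3 ≤ 4 by norm_num), pow_pos (show (0:ℝ) < N by linarith) 3]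
    _ = (6 * N) ^ (2 * 2) := by ring

lemma le_sub_one_div_two_mul_sq_of_sq_eq {x N : ℝ} (hN : 4 ≤ N) (hx : 0 ≤ x)
    (hx2 : x ^ 2 = 1 / (2 * N ^ 3)) : x ≤ ((N - 1) / (2 * N)) ^ 2 := by
  have hN3 : 0 < N ^ 3 := by positivity
  have h8 : 8 * N ≤ (N - 1) ^ 4 := by nlinarith [sq_nonneg (N - 1), mul_self_nonneg ((N - 1) ^ 2 - 9)]
  rw [← pow_le_pow_iff_left₀ hx (by positivity) two_ne_zero, hx2, ← pow_mul, div_pow,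
    div_le_div_iff₀ (by positivity) (by positivity)]
  calc 1 * (2 * N) ^ (2 * 2) = 2 * N ^ 3 * (8 * N) := by ring
    _ ≤ (N - 1) ^ (2 * 2) * (2 * N ^ 3) := by rw [mul_comm]; gcongr

lemma div_le_sqrt_div_of_le_sq {x M N : ℝ} (hM : 0 < M) (hN : 0 < N) (hx : 0 ≤ x)
    (h : x ≤ (M / (2 * N)) ^ 2) : x / M ≤ √x / (2 * N) := by
  have hsqrt : √x ≤ M / (2 * N) := sqrt_le_iff.mpr ⟨by positivity, h⟩
  calc x / M = √x * √x / M := by rw [mul_self_sqrt hx]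
    _ ≤ √x * (M / (2 * N)) / M := by gcongr
    _ = √x / (2 * N) := by field_simp

lemma div_twelve_mul_sq_le_sqrt_div {x c N : ℝ} (hN : 0 < N) (hc : 0 ≤ c)
    (hx : (c / (6 * N)) ^ 2 ≤ x) : c / (12 * N ^ 2) ≤ √x / (2 * N) := by
  have hsqrt : c / (6 * N) ≤ √x := (le_sqrt (by positivity) (le_trans (sq_nonneg _) hx)).mpr hx
  calc c / (12 * N ^ 2) = c / (6 * N) / (2 * N) := by field_simp; ring
    _ ≤ √x / (2 * N) := by gcongr

lemma add_one_div_sq_le_add_sqrt_div {x c N : ℝ} (hN : 0 < N) (hc : 1 ≤ c)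
    (hx : (c / (6 * N)) ^ 2 ≤ x) : ((c + 1) / (6 * N)) ^ 2 ≤ x + √x / (2 * N) := by
  have hsqrt := div_twelve_mul_sq_le_sqrt_div hN (by linarith) hx
  calc ((c + 1) / (6 * N)) ^ 2 ≤ (c / (6 * N)) ^ 2 + c / (12 * N ^ 2) := by
        rw [div_pow, div_pow, ← sub_nonneg]
        field_simp
        nlinarith
    _ ≤ x + √x / (2 * N) := add_le_add hx hsqrt

section Recurrence

variable {n : ℕ} {a A : ℕ → ℝ}

lemma pos_of_recurrence (hn : 1 < (n : ℝ)) (ha1 : 0 < a 1) (ha2 : a 2 = a 1 / ((n : ℝ) - 1))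
    (hA0 : A 0 = 0) (hArec : ∀ k, A (k + 1) = A k + a (k + 1))
    (harec : ∀ k, 1 ≤ k →
      a (k + 2) = min ((n : ℝ) * a (k + 1) / ((n : ℝ) - 1)) (√(A (k + 1)) / (2 * n))) :
    ∀ m, 0 < a (m + 1) ∧ 0 < A (m + 1) := by
  have hn1 : 0 < (n : ℝ) - 1 := by linarith
  intro m
  induction m with
  | zero => exact ⟨ha1, by rw [hArec, hA0, zero_add]; exact ha1⟩
  | succ m ih =>
    have ha : 0 < a (m + 2) := by
      rcases Nat.eq_zero_or_pos m with rfl | hm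
      · rw [ha2]; exact div_pos ha1 hn1
      · rw [harec m hm]
        exact lt_min (div_pos (mul_pos (by linarith) ih.1) hn1)
          (div_pos (sqrt_pos.mpr ih.2) (by linarith))
    exact ⟨ha, by rw [hArec]; linarith [ih.2]⟩

lemma monotone_of_forall_succ_eq_add_pos (hArec : ∀ k, A (k + 1) = A k + a (k + 1))
    (hpos : ∀ m, 0 < a (m + 1)) : Monotone A :=
  monotone_nat_of_le_succ fun m => by rw [hArec]; linarith [hpos m]

lemma le_sqrt_div_of_recurrence (hn : 0 < (n : ℝ)) (hA : Monotone A)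
    (ha2 : a 2 ≤ √(A 2) / (2 * n))
    (harec : ∀ k, 1 ≤ k →
      a (k + 2) = min ((n : ℝ) * a (k + 1) / ((n : ℝ) - 1)) (√(A (k + 1)) / (2 * n))) :
    ∀ m, 2 ≤ m → a m ≤ √(A m) / (2 * n) := by
  intro m hm
  induction m, hm using Nat.le_induction with
  | base => exact ha2
  | succ m hm ih =>
    obtain ⟨k, rfl⟩ : ∃ k, m = k + 1 := ⟨m - 1, by omega⟩
    rw [harec k (by omega)]
    refine (min_le_right _ _).trans ?_
    gcongr
    exact hA (Nat.le_succ _)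

lemma monotoneOn_of_recurrence (hn : 1 < (n : ℝ)) (hpos : ∀ m, 0 < a (m + 1))
    (hle : ∀ m, 2 ≤ m → a m ≤ √(A m) / (2 * n))
    (harec : ∀ k, 1 ≤ k →
      a (k + 2) = min ((n : ℝ) * a (k + 1) / ((n : ℝ) - 1)) (√(A (k + 1)) / (2 * n))) :
    MonotoneOn a (Set.Ici 2) := by
  refine monotoneOn_nat_Ici_of_le_succ fun m hm => ?_
  obtain ⟨k, rfl⟩ : ∃ k, m = k + 1 := ⟨m - 1, by omega⟩
  rw [harec k (by omega)]
  refine le_min ?_ (hle _ hm)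
  rw [le_div_iff₀ (by linarith)]
  nlinarith [hpos k]

end Recurrence

lemma sq_div_le_of_forall_succ_eq_add_sqrt {A : ℕ → ℝ} {N : ℝ} (hN : 0 < N) (hA : Monotone A)
    {k : ℕ} {s : Fin k → ℕ} (hs : StrictMono s) (h0 : ∀ i, (1 / (6 * N)) ^ 2 ≤ A (s i))
    (hstep : ∀ i, A (s i + 1) = A (s i) + √(A (s i)) / (2 * N)) :
    ∀ j (hj : j < k), (((j + 1 : ℕ) : ℝ) / (6 * N)) ^ 2 ≤ A (s ⟨j, hj⟩) := by
  intro j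
  induction j with
  | zero => intro hj; simpa using h0 ⟨0, hj⟩
  | succ j ih =>
    intro hj
    calc (((j + 1 + 1 : ℕ) : ℝ) / (6 * N)) ^ 2
        ≤ A (s ⟨j, by omega⟩) + √(A (s ⟨j, by omega⟩)) / (2 * N) := by
          push_cast
          exact add_one_div_sq_le_add_sqrt_div hN (by linarith [j.cast_nonneg (α := ℝ)])
            (by exact_mod_cast ih (by omega))
      _ = A (s ⟨j, by omega⟩ + 1) := (hstep _).symm
      _ ≤ A (s ⟨j + 1, hj⟩) := hA (hs (Fin.mk_lt_mk.mpr (Nat.lt_succ_self j)))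

/-- If `s_1 < … < s_k` are Type II indices (each `s_i ≥ 2` with
`a_{s_i+1} = √(A_{s_i})/(2n)`), then `A_{s_k} ≥ k²/(36n²)` and `a_{s_k} ≥ (k−1)/(12n²)`. -/
theorem typeII_growth (n : ℕ) (hn : 4 ≤ n)
    (a A : ℕ → ℝ)
    (ha1 : a 1 = 1 / (Real.sqrt 2 * (n : ℝ) ^ ((3:ℝ)/2)))
    (ha2 : a 2 = a 1 / ((n : ℝ) - 1))
    (hA0 : A 0 = 0)
    (hArec : ∀ k, A (k+1) = A k + a (k+1))
    (harec : ∀ k, 1 ≤ k →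
      a (k+2) = min ((n : ℝ) * a (k+1) / ((n : ℝ) - 1)) (Real.sqrt (A (k+1)) / (2 * n)))
    (k : ℕ) (hk : 1 ≤ k)
    (s : Fin k → ℕ) (hs_mono : StrictMono s)
    (hs_ge : ∀ i, 2 ≤ s i)
    (hs_typeII : ∀ i, a (s i + 1) = Real.sqrt (A (s i)) / (2 * n)) :
    A (s ⟨k - 1, by omega⟩) ≥ (k : ℝ)^2 / (36 * (n : ℝ)^2) ∧
    a (s ⟨k - 1, by omega⟩) ≥ ((k : ℝ) - 1) / (12 * (n : ℝ)^2) := by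
  have hnR : (4 : ℝ) ≤ n := by exact_mod_cast hn
  have ha1_pos : 0 < a 1 := by rw [ha1]; positivity
  have ha1_sq : a 1 ^ 2 = 1 / (2 * (n : ℝ) ^ 3) := by
    rw [ha1, div_pow, one_pow, sq_sqrt_two_mul_rpow_three_halves (by positivity)]
  have hpos := pos_of_recurrence (by linarith) ha1_pos ha2 hA0 hArec harec
  have hA_mono := monotone_of_forall_succ_eq_add_pos hArec fun m => (hpos m).1
  have hA1 : A 1 = a 1 := by rw [hArec, hA0, zero_add]
  have ha2_le : a 2 ≤ √(A 2) / (2 * n) := by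
    calc a 2 ≤ √(a 1) / (2 * n) := ha2 ▸ div_le_sqrt_div_of_le_sq (by linarith) (by linarith)
          ha1_pos.le (le_sub_one_div_two_mul_sq_of_sq_eq hnR ha1_pos.le ha1_sq)
      _ ≤ √(A 2) / (2 * n) := by gcongr; exact hA1 ▸ hA_mono one_le_two
  have ha_mono := monotoneOn_of_recurrence (by linarith) (fun m => (hpos m).1)
    (le_sqrt_div_of_recurrence (by linarith) hA_mono ha2_le harec) harec
  have hAs := sq_div_le_of_forall_succ_eq_add_sqrt (N := n) (by positivity) hA_mono hs_mono
    (fun i => (one_div_six_mul_sq_le_of_sq_eq (by linarith) ha1_pos.le ha1_sq).trans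
      (hA1 ▸ hA_mono (by linarith [hs_ge i])))
    (fun i => by rw [hArec, hs_typeII])
  refine ⟨?_, ?_⟩
  · have h := hAs (k - 1) (by omega)
    rwa [Nat.sub_add_cancel hk, div_pow, mul_pow, show (6 : ℝ) ^ 2 = 36 by norm_num] at h
  · obtain rfl | hk2 := hk.eq_or_lt
    · have h := (hpos (s ⟨0, by omega⟩ - 1)).1
      rw [Nat.sub_add_cancel (by linarith [hs_ge ⟨0, by omega⟩])] at h
      simpa using h.le
    · have h := hAs (k - 2) (by omega)
      rw [show k - 2 + 1 = k - 1 by omega, Nat.cast_sub hk, Nat.cast_one] at h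
      calc ((k : ℝ) - 1) / (12 * (n : ℝ) ^ 2)
          ≤ √(A (s ⟨k - 2, by omega⟩)) / (2 * n) :=
            div_twelve_mul_sq_le_sqrt_div (by positivity) (sub_nonneg.mpr (by exact_mod_cast hk)) h
        _ = a (s ⟨k - 2, by omega⟩ + 1) := (hs_typeII _).symm
        _ ≤ a (s ⟨k - 1, by omega⟩) :=
            ha_mono (Set.mem_Ici.mpr ((hs_ge _).trans (Nat.le_succ _))) (Set.mem_Ici.mpr (hs_ge _))
              (hs_mono (Fin.mk_lt_mk.mpr (by omega)))
end

section
/- Suppose k₀ ≥ 2 is an index such that a_{k₀} > (n−1)/(12·n²) and A_{k₀} ≥ 1/36. Then for every k ≥ k₀ it holds that a_k ≥ (k−1−k₀+n)/(12·n²) and A_k ≥ (k−k₀+n)²/(36·n²). -/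
/-- If `k₀ ≥ 2` satisfies `a_{k₀} > (n−1)/(12n²)` and `A_{k₀} ≥ 1/36`, then for every `k ≥ k₀`,
`a_k ≥ (k−1−k₀+n)/(12n²)` and `A_k ≥ (k−k₀+n)²/(36n²)`. -/
theorem growth_after_k0 (n : ℕ) (hn : 4 ≤ n)
    (a A : ℕ → ℝ)
    (ha1 : a 1 = 1 / (Real.sqrt 2 * (n : ℝ) ^ ((3:ℝ)/2)))
    (ha2 : a 2 = a 1 / ((n : ℝ) - 1))
    (hA0 : A 0 = 0)
    (hArec : ∀ k, A (k+1) = A k + a (k+1))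
    (harec : ∀ k, 1 ≤ k →
      a (k+2) = min ((n : ℝ) * a (k+1) / ((n : ℝ) - 1)) (Real.sqrt (A (k+1)) / (2 * n)))
    (k₀ : ℕ) (hk₀ : 2 ≤ k₀)
    (hak₀ : a k₀ > ((n : ℝ) - 1) / (12 * (n : ℝ)^2))
    (hAk₀ : A k₀ ≥ 1 / 36) :
    ∀ k, k₀ ≤ k →
      a k ≥ ((k : ℝ) - 1 - (k₀ : ℝ) + (n : ℝ)) / (12 * (n : ℝ)^2) ∧
      A k ≥ ((k : ℝ) - (k₀ : ℝ) + (n : ℝ))^2 / (36 * (n : ℝ)^2) := by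
  have hn' : (4:ℝ) ≤ (n:ℝ) := by exact_mod_cast hn
  have hn0 : (0:ℝ) < (n:ℝ) := by linarith
  have hn1 : (1:ℝ) < (n:ℝ) := by linarith
  intro k hk
  induction k, hk using Nat.le_induction with
  | base =>
    constructor
    · have h1 : ((k₀:ℝ) - 1 - (k₀:ℝ) + (n:ℝ)) = (n:ℝ) - 1 := by ring
      rw [h1]; exact le_of_lt hak₀
    · have h2 : ((k₀:ℝ) - (k₀:ℝ) + (n:ℝ))^2 / (36 * (n:ℝ)^2) = 1/36 := by
        field_simp; ring
      rw [h2]; exact hAk₀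
  | succ k hk ih =>
    obtain ⟨iha, ihA⟩ := ih
    have hkk : (k₀:ℝ) ≤ (k:ℝ) := by exact_mod_cast hk
    set c : ℝ := (k:ℝ) - (k₀:ℝ) + (n:ℝ) with hc
    have hc4 : (4:ℝ) ≤ c := by simp only [hc]; linarith
    have hk2 : 2 ≤ k := le_trans hk₀ hk
    have hrec := harec (k-1) (by omega)
    rw [show k-1+2 = k+1 from by omega, show k-1+1 = k from by omega] at hrec
    -- first branch bound
    have ha' : ((k:ℝ) - 1 - (k₀:ℝ) + (n:ℝ)) ≤ a k * (12 * (n:ℝ)^2) := by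
      rw [← div_le_iff₀ (by positivity)]; exact iha
    have h1 : c / (12 * (n:ℝ)^2) ≤ (n:ℝ) * a k / ((n:ℝ) - 1) := by
      rw [div_le_div_iff₀ (by positivity) (by linarith)]
      nlinarith [mul_le_mul_of_nonneg_left ha' (le_of_lt hn0)]
    -- second branch bound
    have hsq : Real.sqrt (A k) ≥ c / (6 * (n:ℝ)) := by
      have heq : c / (6 * (n:ℝ)) = Real.sqrt ((c / (6 * (n:ℝ)))^2) := by
        rw [Real.sqrt_sq (by positivity)]
      rw [heq]
      apply Real.sqrt_le_sqrt
      have : (c / (6 * (n:ℝ)))^2 = c^2 / (36 * (n:ℝ)^2) := by ring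
      rw [this]; exact ihA
    have h2 : c / (12 * (n:ℝ)^2) ≤ Real.sqrt (A k) / (2 * (n:ℝ)) := by
      rw [le_div_iff₀ (by positivity)]
      calc c / (12 * (n:ℝ)^2) * (2 * (n:ℝ)) = c / (6 * (n:ℝ)) := by
            field_simp; ring
        _ ≤ Real.sqrt (A k) := hsq
    have hak1 : a (k+1) ≥ c / (12 * (n:ℝ)^2) := by
      rw [hrec]; exact le_min h1 h2
    have hcast : ((k+1 : ℕ) : ℝ) = (k:ℝ) + 1 := by push_cast; ring
    constructor
    · rw [hcast]
      have : ((k:ℝ) + 1 - 1 - (k₀:ℝ) + (n:ℝ)) = c := by rw [hc]; ring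
      rw [this]; exact hak1
    · rw [hcast, hArec k]
      have hce : ((k:ℝ) + 1 - (k₀:ℝ) + (n:ℝ)) = c + 1 := by rw [hc]; ring
      rw [hce]
      have hsum : c^2 / (36 * (n:ℝ)^2) + c / (12 * (n:ℝ)^2)
          = (c^2 + 3*c) / (36 * (n:ℝ)^2) := by
        field_simp; ring
      have hkey : (c+1)^2 / (36 * (n:ℝ)^2) ≤ (c^2 + 3*c) / (36 * (n:ℝ)^2) := by
        gcongr
        nlinarith
      linarith [ihA, hak1, hsum, hkey]
end

section
/- Suppose there exists an index k ≥ 2 with a_k > (n−1)/(12·n²) and A_k ≥ 1/36, and let k₀ be the least such index. Then the number of Type I indices s with 2 ≤ s < k₀ is at most (3/2)·n·ln n. -/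
/-!
From index 2 on the sequence `a` never decreases: a Type II step gives
`a_{s+1} = √A_s/(2n) ≥ √A_{s-1}/(2n) ≥ a_s`, and a Type I step multiplies `a_s` by `n/(n-1)`.
Hence `a_{k₀} ≥ (n/(n-1))^T a_2` with `T` the number of Type I indices below `k₀`. Minimality of
`k₀` makes one branch of the minimum defining `a_{k₀}` at most `1/(12n)`, and
`a_2 = 1/(√2 n^{3/2} (n-1))` then gives `(n/(n-1))^T ≤ n^{3/2}`. Taking logarithms and using
`log (n/(n-1)) ≥ 1/n` yields `T ≤ (3/2) n log n`.
-/

theorem pow_card_filter_mul_le {a : ℕ → ℝ} {r : ℝ} (hr : 0 ≤ r) {p : ℕ → Prop} [DecidablePred p]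
    {b : ℕ} (hjump : ∀ s, b ≤ s → p s → r * a s ≤ a (s + 1))
    (hstay : ∀ s, b ≤ s → ¬p s → a s ≤ a (s + 1)) :
    ∀ m, b ≤ m → r ^ ((Finset.Ico b m).filter p).card * a b ≤ a m := by
  intro m hm
  induction m, hm using Nat.le_induction with
  | base => simp
  | succ m hm ih =>
    rw [Finset.card_filter, Finset.sum_Ico_succ_top hm, ← Finset.card_filter, pow_add]
    split_ifs with hpm
    · calc r ^ _ * r ^ 1 * a b = r * (r ^ _ * a b) := by ring
        _ ≤ r * a m := by gcongr
        _ ≤ a (m + 1) := hjump m hm hpm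
    · simpa using ih.trans (hstay m hm hpm)

theorem le_mul_log_of_pow_le_rpow {x p : ℝ} (hx : 1 < x) {T : ℕ}
    (hT : (x / (x - 1)) ^ T ≤ x ^ p) : (T : ℝ) ≤ p * x * Real.log x := by
  have hx0 : 0 < x := by linarith
  have hx1 : 0 < x - 1 := by linarith
  have hlog : T * Real.log (x / (x - 1)) ≤ p * Real.log x := by
    rw [← Real.log_pow, ← Real.log_rpow hx0]
    exact Real.log_le_log (by positivity) hT
  have hinv : 1 / x ≤ Real.log (x / (x - 1)) := by
    have := Real.one_sub_inv_le_log_of_pos (div_pos hx0 hx1)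
    rwa [inv_div, one_sub_div hx0.ne', sub_sub_cancel] at this
  have : T * (1 / x) ≤ p * Real.log x :=
    (mul_le_mul_of_nonneg_left hinv T.cast_nonneg).trans hlog
  rw [mul_one_div, div_le_iff₀ hx0] at this
  linarith

structure MinRecursion (n : ℝ) (a A : ℕ → ℝ) : Prop where
  sum_zero : A 0 = 0
  sum_succ : ∀ k, A (k + 1) = A k + a (k + 1)
  step : ∀ k, 1 ≤ k → a (k + 2) = min (n * a (k + 1) / (n - 1)) (√(A (k + 1)) / (2 * n))

namespace MinRecursion

variable {n : ℝ} {a A : ℕ → ℝ}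

theorem pos (h : MinRecursion n a A) (hn : 1 < n) (ha1 : 0 < a 1) (ha2 : 0 < a 2) :
    ∀ k, 1 ≤ k → 0 < a k := by
  have hsum_and_next : ∀ k, 1 ≤ k → 0 < A k ∧ 0 < a (k + 1) := by
    intro k hk
    induction k, hk using Nat.le_induction with
    | base => exact ⟨by simpa [h.sum_succ 0, h.sum_zero] using ha1, ha2⟩
    | succ k hk ih =>
      have hA : 0 < A (k + 1) := by rw [h.sum_succ]; linarith [ih.1, ih.2]
      refine ⟨hA, ?_⟩
      rw [h.step k hk]
      exact lt_min (div_pos (mul_pos (by linarith) ih.2) (by linarith))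
        (div_pos (Real.sqrt_pos.2 hA) (by linarith))
  intro k hk
  obtain rfl | hk := hk.eq_or_lt
  · exact ha1
  obtain ⟨j, rfl⟩ : ∃ j, k = j + 2 := ⟨k - 2, by omega⟩
  exact (hsum_and_next (j + 1) (by omega)).2

theorem monotone_sum (h : MinRecursion n a A) (hn : 1 < n) (ha1 : 0 < a 1) (ha2 : 0 < a 2) :
    Monotone A :=
  monotone_nat_of_le_succ fun k => by
    rw [h.sum_succ]; linarith [h.pos hn ha1 ha2 (k + 1) (by omega)]

theorem le_sqrt_sum (h : MinRecursion n a A) (hn : 0 < n) (hA : Monotone A)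
    (h2 : a 2 ≤ √(A 2) / (2 * n)) : ∀ s, 2 ≤ s → a s ≤ √(A s) / (2 * n) := by
  intro s hs
  obtain rfl | hs := hs.eq_or_lt
  · exact h2
  obtain ⟨k, rfl⟩ : ∃ k, s = k + 2 := ⟨s - 2, by omega⟩
  calc a (k + 2) ≤ √(A (k + 1)) / (2 * n) := h.step k (by omega) ▸ min_le_right _ _
    _ ≤ √(A (k + 2)) / (2 * n) := by gcongr; exact hA (by omega)

theorem le_succ_of_ne (h : MinRecursion n a A) (hn : 0 < n) (hA : Monotone A)
    (h2 : a 2 ≤ √(A 2) / (2 * n)) {s : ℕ} (hs : 2 ≤ s) (hII : a (s + 1) ≠ n * a s / (n - 1)) :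
    a s ≤ a (s + 1) := by
  obtain ⟨k, rfl⟩ : ∃ k, s = k + 1 := ⟨s - 1, by omega⟩
  have hstep := h.step k (by omega)
  rcases min_choice (n * a (k + 1) / (n - 1)) (√(A (k + 1)) / (2 * n)) with hmin | hmin
  · exact absurd (hstep.trans hmin) hII
  · rw [hstep, hmin]
    exact h.le_sqrt_sum hn hA h2 _ hs

theorem succ_le_of_below_threshold (h : MinRecursion n a A) (hn : 1 < n) {k : ℕ} (hk : 2 ≤ k)
    (hbelow : a k ≤ (n - 1) / (12 * n ^ 2) ∨ A k < 1 / 36) : a (k + 1) ≤ 1 / (12 * n) := by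
  obtain ⟨j, rfl⟩ : ∃ j, k = j + 1 := ⟨k - 1, by omega⟩
  rw [h.step j (by omega)]
  have hn1 : n - 1 ≠ 0 := by linarith
  rcases hbelow with ha | hA
  · refine min_le_of_left_le ?_
    calc n * a (j + 1) / (n - 1) ≤ n * ((n - 1) / (12 * n ^ 2)) / (n - 1) := by gcongr
      _ = 1 / (12 * n) := by field_simp
  · refine min_le_of_right_le ?_
    have hsqrt : √(A (j + 1)) ≤ 1 / 6 := Real.sqrt_le_iff.2 ⟨by norm_num, by linarith⟩
    calc √(A (j + 1)) / (2 * n) ≤ (1 / 6) / (2 * n) := by gcongr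
      _ = 1 / (12 * n) := by ring

theorem a_two_le_sqrt_sum (h : MinRecursion n a A) (hn : 4 ≤ n)
    (ha1 : a 1 = 1 / (√2 * n ^ ((3 : ℝ) / 2))) (ha2 : a 2 = a 1 / (n - 1)) :
    a 2 ≤ √(A 2) / (2 * n) := by
  have hP : 8 ≤ n ^ ((3 : ℝ) / 2) :=
    calc (8 : ℝ) = 4 ^ ((3 : ℝ) / 2) := by
          rw [show (4 : ℝ) = 2 ^ (2 : ℝ) by norm_num, ← Real.rpow_mul (by norm_num)]; norm_num
      _ ≤ n ^ ((3 : ℝ) / 2) := Real.rpow_le_rpow (by norm_num) hn (by norm_num)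
  have ha1_le : a 1 ≤ 1 / 8 := by
    rw [ha1]
    gcongr
    nlinarith [Real.one_lt_sqrt_two]
  have ha1_nonneg : 0 ≤ a 1 := by rw [ha1]; positivity
  have ha2_nonneg : 0 ≤ a 2 := by rw [ha2]; exact div_nonneg ha1_nonneg (by linarith)
  have hsqrt_a1 : √(a 1) ≤ (n - 1) / (2 * n) := by
    have h38 : 3 / 8 ≤ (n - 1) / (2 * n) := by rw [le_div_iff₀ (by linarith)]; linarith
    refine Real.sqrt_le_iff.2 ⟨by linarith, ?_⟩
    calc a 1 ≤ (3 / 8) ^ 2 := by linarith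
      _ ≤ ((n - 1) / (2 * n)) ^ 2 := by gcongr
  have hn1 : n - 1 ≠ 0 := by linarith
  calc a 2 = √(a 1) * √(a 1) / (n - 1) := by rw [Real.mul_self_sqrt ha1_nonneg, ha2]
    _ ≤ √(a 1) * ((n - 1) / (2 * n)) / (n - 1) := by gcongr; linarith
    _ = √(a 1) / (2 * n) := by field_simp
    _ ≤ √(A 2) / (2 * n) := by
      gcongr
      rw [h.sum_succ, h.sum_succ, h.sum_zero]
      linarith

theorem pow_card_mul_le (h : MinRecursion n a A) (hn : 4 ≤ n)
    (ha1 : a 1 = 1 / (√2 * n ^ ((3 : ℝ) / 2))) (ha2 : a 2 = a 1 / (n - 1)) :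
    ∀ m, 2 ≤ m → (n / (n - 1)) ^ ((Finset.Ico 2 m).filter
      (fun s => a (s + 1) = n * a s / (n - 1))).card * a 2 ≤ a m := by
  have ha1_pos : 0 < a 1 := by
    have : 0 < n := by linarith
    rw [ha1]; positivity
  have ha2_pos : 0 < a 2 := by rw [ha2]; exact div_pos ha1_pos (by linarith)
  have hA := h.monotone_sum (by linarith) ha1_pos ha2_pos
  have h2 := h.a_two_le_sqrt_sum hn ha1 ha2
  refine pow_card_filter_mul_le (div_nonneg (by linarith) (by linarith)) (fun s _ hI => ?_)
    (fun s hs hII => h.le_succ_of_ne (by linarith) hA h2 hs hII)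
  rw [hI, mul_div_right_comm]

end MinRecursion

theorem pow_le_rpow_of_mul_le {n : ℝ} {a : ℕ → ℝ} (hn : 4 ≤ n)
    (ha1 : a 1 = 1 / (√2 * n ^ ((3 : ℝ) / 2))) (ha2 : a 2 = a 1 / (n - 1)) {T : ℕ}
    (hT : (n / (n - 1)) ^ T * a 2 ≤ 1 / (12 * n)) : (n / (n - 1)) ^ T ≤ n ^ ((3 : ℝ) / 2) := by
  have hP : 0 < n ^ ((3 : ℝ) / 2) := Real.rpow_pos_of_pos (by linarith) _
  have hn1 : 0 < n - 1 := by linarith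
  rw [ha2, ha1, div_div, mul_one_div, div_le_div_iff₀ (by positivity) (by positivity)] at hT
  refine le_of_mul_le_mul_right (hT.trans ?_) (by positivity : (0 : ℝ) < 12 * n)
  have hcoef : √2 * (n - 1) ≤ 12 * n := by nlinarith [Real.sqrt_two_lt_three_halves]
  calc 1 * (√2 * n ^ ((3 : ℝ) / 2) * (n - 1)) = n ^ ((3 : ℝ) / 2) * (√2 * (n - 1)) := by ring
    _ ≤ n ^ ((3 : ℝ) / 2) * (12 * n) := by gcongr

theorem typeI_count_before_k0_general (n : ℕ) (hn : 4 ≤ n)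
    (a A : ℕ → ℝ)
    (ha1 : a 1 = 1 / (Real.sqrt 2 * (n : ℝ) ^ ((3:ℝ)/2)))
    (ha2 : a 2 = a 1 / ((n : ℝ) - 1))
    (hA0 : A 0 = 0)
    (hArec : ∀ k, A (k+1) = A k + a (k+1))
    (harec : ∀ k, 1 ≤ k →
      a (k+2) = min ((n : ℝ) * a (k+1) / ((n : ℝ) - 1)) (Real.sqrt (A (k+1)) / (2 * n)))
    (k₀ : ℕ)
    (hleast : ∀ k, 2 ≤ k → a k > ((n : ℝ) - 1) / (12 * (n : ℝ)^2) → A k ≥ 1 / 36 → k₀ ≤ k) :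
    (((Finset.Ico 2 k₀).filter
        (fun s => a (s + 1) = (n : ℝ) * a s / ((n : ℝ) - 1))).card : ℝ) ≤
      (3 / 2) * (n : ℝ) * Real.log n := by
  have hN : (4 : ℝ) ≤ n := by exact_mod_cast hn
  have h : MinRecursion n a A := ⟨hA0, hArec, harec⟩
  rcases Nat.lt_or_ge k₀ 3 with hk₀ | hk₀
  · rw [Finset.Ico_eq_empty_of_le (by omega), Finset.filter_empty, Finset.card_empty, Nat.cast_zero]
    positivity
  obtain ⟨k, rfl⟩ : ∃ k, k₀ = k + 3 := ⟨k₀ - 3, by omega⟩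
  have hlast : a (k + 3) ≤ 1 / (12 * n) := by
    refine h.succ_le_of_below_threshold (by linarith) (by omega) ?_
    by_contra! habove
    have := hleast (k + 2) (by omega) habove.1 habove.2
    omega
  refine le_mul_log_of_pow_le_rpow (by linarith) (pow_le_rpow_of_mul_le hN ha1 ha2 ?_)
  exact (h.pow_card_mul_le hN ha1 ha2 (k + 3) (by omega)).trans hlast

/-- If `k₀` is the least index `k ≥ 2` with `a_k > (n−1)/(12n²)` and `A_k ≥ 1/36`, then the
number of Type I indices `s` with `2 ≤ s < k₀` is at most `(3/2)·n·ln n`. -/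
theorem typeI_count_before_k0 (n : ℕ) (hn : 4 ≤ n)
    (a A : ℕ → ℝ)
    (ha1 : a 1 = 1 / (Real.sqrt 2 * (n : ℝ) ^ ((3:ℝ)/2)))
    (ha2 : a 2 = a 1 / ((n : ℝ) - 1))
    (hA0 : A 0 = 0)
    (hArec : ∀ k, A (k+1) = A k + a (k+1))
    (harec : ∀ k, 1 ≤ k →
      a (k+2) = min ((n : ℝ) * a (k+1) / ((n : ℝ) - 1)) (Real.sqrt (A (k+1)) / (2 * n)))
    (k₀ : ℕ) (hk₀ : 2 ≤ k₀)
    (hak₀ : a k₀ > ((n : ℝ) - 1) / (12 * (n : ℝ)^2))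
    (hAk₀ : A k₀ ≥ 1 / 36)
    (hleast : ∀ k, 2 ≤ k → a k > ((n : ℝ) - 1) / (12 * (n : ℝ)^2) → A k ≥ 1 / 36 → k₀ ≤ k) :
    (((Finset.Ico 2 k₀).filter
        (fun s => a (s + 1) = (n : ℝ) * a s / ((n : ℝ) - 1))).card : ℝ) ≤
      (3 / 2) * (n : ℝ) * Real.log n :=
  typeI_count_before_k0_general n hn a A ha1 ha2 hA0 hArec harec k₀ hleast
end

section
/- For every integer k with k ≥ (5/2)·n·ln n, it holds that A_k ≥ (k − (5/2)·n·ln n)²/(36·n²). -/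
/-!
With `r = n/(n-1)` the increments grow geometrically, `a_{k+1} = r a_k`, until the cap
`√A_k/(2n)` becomes active; from then on `√A` grows linearly, roughly by `1/(4n)` per step.
Both regimes are captured by the comparison sequence
`φ_m = min (a₁ r^m / 2) (Q_m²)`, `Q_m = (n-1)/(4n) + max (m+1-k₀) 0 / (6n)`, `k₀ = (5/2) n ln n`,
which obeys the recursion of `A` with `≤` in place of `=`, so `φ_m ≤ A_{m+1}` by induction.
Since `r^m ≥ e^{m/n}` and `e^{k₀/n} = n^{5/2}`, once `m+1 ≥ k₀` the geometric branch dominates,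
`φ_m = Q_m² ≥ ((m+1-k₀)/(6n))²`.
-/

open Real

section Comparison

variable {r d : ℝ} {a A φ g : ℕ → ℝ}

theorem le_succ_of_subsolution (hr : 0 ≤ r) (hd : 0 ≤ d)
    (hArec : ∀ k, A (k + 1) = A k + a (k + 1))
    (harec : ∀ k, 1 ≤ k → a (k + 2) = min (r * a (k + 1)) (√(A (k + 1)) / d))
    (hφ₀ : φ 0 ≤ A 1) (hg₀ : g 0 ≤ a 2) (hg : ∀ m, g (m + 1) = r * g m)
    (hφ_sqrt : ∀ m, √(φ (m + 1)) ≤ r * √(φ m))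
    (hφ_step : ∀ m, φ (m + 1) ≤ φ m + min (g m) (√(φ m) / d)) (m : ℕ) :
    φ m ≤ A (m + 1) := by
  suffices h : ∀ m, φ m ≤ A (m + 1) ∧ min (g m) (√(φ m) / d) ≤ a (m + 2) from (h m).1
  intro m
  induction m with
  | zero => exact ⟨hφ₀, (min_le_left _ _).trans hg₀⟩
  | succ m ih =>
    obtain ⟨hA, ha⟩ := ih
    have hA' : φ (m + 1) ≤ A (m + 2) := by linarith [hArec (m + 1), hφ_step m]
    refine ⟨hA', ?_⟩
    rw [harec (m + 1) m.succ_pos]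
    refine le_min ?_ ((min_le_right _ _).trans (by gcongr))
    calc min (g (m + 1)) (√(φ (m + 1)) / d)
        ≤ min (r * g m) (r * (√(φ m) / d)) := by
          rw [hg, mul_div_assoc']
          gcongr
          exact hφ_sqrt m
      _ = r * min (g m) (√(φ m) / d) := (mul_min_of_nonneg _ _ hr).symm
      _ ≤ r * a (m + 2) := by gcongr

end Comparison

namespace GrowthBound

variable {n : ℝ}

noncomputable def ratio (n : ℝ) : ℝ := n / (n - 1)

noncomputable def firstTerm (n : ℝ) : ℝ := 1 / (√2 * n ^ ((3 : ℝ) / 2))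

noncomputable def threshold (n : ℝ) : ℝ := 5 / 2 * n * log n

noncomputable def geomBound (n : ℝ) (m : ℕ) : ℝ := firstTerm n / 2 * ratio n ^ m

noncomputable def quadBound (n : ℝ) (m : ℕ) : ℝ :=
  (n - 1) / (4 * n) + max (m + 1 - threshold n) 0 / (6 * n)

noncomputable def lowerBound (n : ℝ) (m : ℕ) : ℝ := min (geomBound n m) (quadBound n m ^ 2)

theorem ratio_pos (hn : 1 < n) : 0 < ratio n := div_pos (by linarith) (by linarith)

theorem ratio_eq_one_add (hn : 1 < n) : ratio n = 1 + 1 / (n - 1) := by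
  have : n - 1 ≠ 0 := by linarith
  rw [ratio]; field_simp; ring

theorem exp_div_le_ratio_pow (hn : 1 < n) (m : ℕ) : exp (m / n) ≤ ratio n ^ m := by
  have hlog : 1 / n ≤ log (ratio n) := by
    have h := one_sub_inv_le_log_of_pos (ratio_pos hn)
    rwa [ratio, inv_div, one_sub_div (by linarith), sub_sub_cancel] at h
  rw [← exp_log (pow_pos (ratio_pos hn) m), log_pow, div_eq_mul_one_div]
  gcongr

theorem firstTerm_pos (hn : 0 < n) : 0 < firstTerm n := by
  unfold firstTerm; positivity

theorem firstTerm_mul_exp_threshold (hn : 0 < n) :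
    firstTerm n * exp (threshold n / n) = n / √2 := by
  have : threshold n / n = log n * (3 / 2) + log n := by
    rw [threshold]; field_simp; ring
  rw [this, exp_add, exp_log hn, ← rpow_def_of_pos hn, firstTerm]
  have : 0 < n ^ ((3 : ℝ) / 2) := by positivity
  field_simp

theorem geomBound_pos (hn : 1 < n) (m : ℕ) : 0 < geomBound n m := by
  have := firstTerm_pos (by linarith : 0 < n)
  have := ratio_pos hn
  unfold geomBound; positivity

theorem geomBound_succ (m : ℕ) : geomBound n (m + 1) = ratio n * geomBound n m := by
  unfold geomBound; ring

theorem geomBound_succ_eq_add (hn : 1 < n) (m : ℕ) :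
    geomBound n (m + 1) = geomBound n m + geomBound n m / (n - 1) := by
  rw [geomBound_succ, ratio_eq_one_add hn]; ring

theorem quadBound_ge (hn : 0 < n) (m : ℕ) : (n - 1) / (4 * n) ≤ quadBound n m :=
  le_add_of_nonneg_right (by positivity)

theorem quadBound_nonneg (hn : 1 < n) (m : ℕ) : 0 ≤ quadBound n m :=
  (div_nonneg (by linarith) (by linarith)).trans (quadBound_ge (by linarith) m)

theorem quadBound_succ_le (hn : 0 < n) (m : ℕ) :
    quadBound n (m + 1) ≤ quadBound n m + 1 / (6 * n) := by
  have hmax : max ((m : ℝ) + 1 + 1 - threshold n) 0 ≤ max ((m : ℝ) + 1 - threshold n) 0 + 1 :=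
    max_le (by linarith [le_max_left ((m : ℝ) + 1 - threshold n) 0])
      (by linarith [le_max_right ((m : ℝ) + 1 - threshold n) 0])
  have : max ((m : ℝ) + 1 + 1 - threshold n) 0 / (6 * n)
      ≤ (max ((m : ℝ) + 1 - threshold n) 0 + 1) / (6 * n) := by gcongr
  rw [add_div] at this
  rw [quadBound, quadBound, Nat.cast_succ]
  linarith

theorem quadBound_succ_le_ratio_mul (hn : 1 < n) (m : ℕ) :
    quadBound n (m + 1) ≤ ratio n * quadBound n m := by
  have hQ := quadBound_ge (by linarith) m
  have : 1 / (6 * n) ≤ 1 / (n - 1) * quadBound n m :=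
    calc 1 / (6 * n) ≤ 1 / (4 * n) := by gcongr; norm_num
      _ = 1 / (n - 1) * ((n - 1) / (4 * n)) := by field_simp [show n - 1 ≠ 0 by linarith]
      _ ≤ 1 / (n - 1) * quadBound n m := by gcongr
  rw [ratio_eq_one_add hn]
  linarith [quadBound_succ_le (by linarith : 0 < n) m]

theorem lowerBound_succ_le (hn : 1 < n) (m : ℕ) :
    lowerBound n (m + 1) ≤ ratio n ^ 2 * lowerBound n m := by
  have hr : 1 ≤ ratio n := by
    rw [ratio_eq_one_add hn]
    linarith [one_div_pos.2 (by linarith : 0 < n - 1)]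
  rw [lowerBound, lowerBound, mul_min_of_nonneg _ _ (sq_nonneg _), ← mul_pow, geomBound_succ]
  refine min_le_min ?_ ?_
  · exact mul_le_mul_of_nonneg_right (le_self_pow₀ hr two_ne_zero) (geomBound_pos hn m).le
  · gcongr
    · exact quadBound_nonneg hn _
    · exact quadBound_succ_le_ratio_mul hn m

theorem sqrt_lowerBound_succ_le (hn : 1 < n) (m : ℕ) :
    √(lowerBound n (m + 1)) ≤ ratio n * √(lowerBound n m) := by
  rw [← sqrt_sq (ratio_pos hn).le, ← sqrt_mul (sq_nonneg _)]
  exact sqrt_le_sqrt (lowerBound_succ_le hn m)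

theorem sq_quadBound_le_geomBound (hn : 4 ≤ n) {m : ℕ} (hm : threshold n ≤ m + 1) :
    quadBound n m ^ 2 ≤ geomBound n m := by
  have hn0 : 0 < n := by linarith
  set t := (m : ℝ) + 1 - threshold n
  have ht0 : 0 ≤ t := by linarith
  have hQ : quadBound n m ≤ 1 + t / (2 * n) := by
    rw [quadBound, max_eq_left ht0]
    have : (n - 1) / (4 * n) ≤ 1 := by rw [div_le_one (by positivity)]; linarith
    have : t / (6 * n) ≤ t / (2 * n) := by gcongr; norm_num
    linarith
  have hc : 1 ≤ (n - 1) / (2 * √2) := by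
    have : √2 ≤ 3 / 2 := by nlinarith [sq_sqrt (zero_le_two : (0 : ℝ) ≤ 2), sqrt_nonneg 2]
    rw [one_le_div (by positivity)]; linarith
  have hr := ratio_pos (by linarith : 1 < n)
  have hG : (n - 1) / (2 * √2) * exp (t / n) ≤ geomBound n m :=
    calc (n - 1) / (2 * √2) * exp (t / n)
        = firstTerm n * exp (threshold n / n) / (2 * ratio n) * exp (t / n) := by
          rw [firstTerm_mul_exp_threshold hn0, ratio]
          field_simp
      _ = firstTerm n / (2 * ratio n) * exp (((m + 1 : ℕ) : ℝ) / n) := by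
          rw [show (((m + 1 : ℕ) : ℝ) / n) = threshold n / n + t / n by push_cast; ring, exp_add]
          ring
      _ ≤ firstTerm n / (2 * ratio n) * ratio n ^ (m + 1) := by
          have := firstTerm_pos hn0
          gcongr
          exact exp_div_le_ratio_pow (by linarith) _
      _ = geomBound n m := by
          rw [geomBound, pow_succ]
          field_simp
  calc quadBound n m ^ 2 ≤ (1 + t / (2 * n)) ^ 2 := by
        gcongr
        exact quadBound_nonneg (by linarith) m
    _ ≤ exp (t / (2 * n)) ^ 2 := by
        gcongr
        linarith [add_one_le_exp (t / (2 * n))]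
    _ = exp (t / n) := by rw [← exp_nat_mul]; congr 1; push_cast; field_simp
    _ ≤ (n - 1) / (2 * √2) * exp (t / n) := le_mul_of_one_le_left (exp_pos _).le hc
    _ ≤ geomBound n m := hG

theorem geomBound_le_of_lt_sq_quadBound (hn : 4 ≤ n) {m : ℕ}
    (h : geomBound n m < quadBound n m ^ 2) : geomBound n m ≤ ((n - 1) / (2 * n)) ^ 2 := by
  rcases le_or_gt (threshold n) (m + 1) with hm | hm
  · exact absurd (sq_quadBound_le_geomBound hn hm) h.not_ge
  · have hQ : quadBound n m = (n - 1) / (4 * n) := by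
      rw [quadBound, max_eq_right (by linarith), zero_div, add_zero]
    refine h.le.trans ?_
    rw [hQ]
    have : 0 ≤ n - 1 := by linarith
    gcongr
    norm_num

theorem lowerBound_succ_le_add_of_sq_le (hn : 2 ≤ n) {m : ℕ}
    (h : quadBound n m ^ 2 ≤ geomBound n m) :
    lowerBound n (m + 1) ≤
      lowerBound n m + min (2 * geomBound n m / (n - 1)) (√(lowerBound n m) / (2 * n)) := by
  set Q := quadBound n m
  have hQ : (n - 1) / (4 * n) ≤ Q := quadBound_ge (by linarith) m
  have hQ₀ : 0 ≤ Q := quadBound_nonneg (by linarith) m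
  have hs : 1 / (6 * n) ≤ Q :=
    le_trans (by rw [div_le_div_iff₀ (by positivity) (by positivity)]; nlinarith) hQ
  have hQ_le : Q / (2 * n) ≤ 2 * geomBound n m / (n - 1) :=
    calc Q / (2 * n) ≤ 2 * Q ^ 2 / (n - 1) := by
          rw [div_le_div_iff₀ (by positivity) (by linarith)]
          rw [div_le_iff₀ (by positivity)] at hQ
          nlinarith
      _ ≤ 2 * geomBound n m / (n - 1) := by gcongr; linarith
  rw [show lowerBound n m = Q ^ 2 from min_eq_right h, sqrt_sq hQ₀, min_eq_right hQ_le]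
  calc lowerBound n (m + 1) ≤ quadBound n (m + 1) ^ 2 := min_le_right _ _
    _ ≤ (Q + 1 / (6 * n)) ^ 2 := by
        gcongr
        · exact quadBound_nonneg (by linarith) _
        · exact quadBound_succ_le (by linarith) m
    _ ≤ Q ^ 2 + Q / (2 * n) := by
        have : Q / (2 * n) = 3 * (Q * (1 / (6 * n))) := by field_simp; ring
        nlinarith [mul_le_mul_of_nonneg_right hs (by positivity : (0 : ℝ) ≤ 1 / (6 * n))]

theorem lowerBound_succ_le_add_of_lt (hn : 4 ≤ n) {m : ℕ}
    (h : geomBound n m < quadBound n m ^ 2) :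
    lowerBound n (m + 1) ≤
      lowerBound n m + min (2 * geomBound n m / (n - 1)) (√(lowerBound n m) / (2 * n)) := by
  set G := geomBound n m
  have hG₀ : 0 < G := geomBound_pos (by linarith) m
  have hG : √G ≤ (n - 1) / (2 * n) := by
    rw [sqrt_le_left (div_nonneg (by linarith) (by linarith))]
    exact geomBound_le_of_lt_sq_quadBound hn h
  have hG_le : G / (n - 1) ≤ √G / (2 * n) :=
    calc G / (n - 1) = √G * √G / (n - 1) := by rw [mul_self_sqrt hG₀.le]
      _ ≤ √G * ((n - 1) / (2 * n)) / (n - 1) := by gcongr; linarith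
      _ = √G / (2 * n) := by field_simp [show n - 1 ≠ 0 by linarith]
  rw [show lowerBound n m = G from min_eq_left h.le]
  calc lowerBound n (m + 1) ≤ geomBound n (m + 1) := min_le_left _ _
    _ = G + G / (n - 1) := geomBound_succ_eq_add (by linarith) m
    _ ≤ G + min (2 * G / (n - 1)) (√G / (2 * n)) := by
        gcongr
        refine le_min ?_ hG_le
        gcongr
        · linarith
        · linarith

theorem lowerBound_succ_le_add (hn : 4 ≤ n) (m : ℕ) :
    lowerBound n (m + 1) ≤
      lowerBound n m + min (2 * geomBound n m / (n - 1)) (√(lowerBound n m) / (2 * n)) :=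
  (le_or_gt (quadBound n m ^ 2) (geomBound n m)).elim
    (lowerBound_succ_le_add_of_sq_le (by linarith)) (lowerBound_succ_le_add_of_lt hn)

theorem sq_div_le_lowerBound (hn : 4 ≤ n) {m : ℕ} (hm : threshold n ≤ m + 1) :
    (m + 1 - threshold n) ^ 2 / (36 * n ^ 2) ≤ lowerBound n m := by
  have hQ : (m + 1 - threshold n) / (6 * n) ≤ quadBound n m := by
    rw [quadBound, max_eq_left (by linarith)]
    exact le_add_of_nonneg_left (div_nonneg (by linarith) (by linarith))
  rw [lowerBound, min_eq_right (sq_quadBound_le_geomBound hn hm)]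
  calc (m + 1 - threshold n) ^ 2 / (36 * n ^ 2) = ((m + 1 - threshold n) / (6 * n)) ^ 2 := by ring
    _ ≤ quadBound n m ^ 2 := by gcongr

end GrowthBound

open GrowthBound in
/-- For every integer `k` with `k ≥ (5/2)·n·ln n`, it holds that
`A_k ≥ (k − (5/2)·n·ln n)²/(36n²)`. -/
theorem Ak_growth_rate (n : ℕ) (hn : 4 ≤ n)
    (a A : ℕ → ℝ)
    (ha1 : a 1 = 1 / (Real.sqrt 2 * (n : ℝ) ^ ((3:ℝ)/2)))
    (ha2 : a 2 = a 1 / ((n : ℝ) - 1))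
    (hA0 : A 0 = 0)
    (hArec : ∀ k, A (k+1) = A k + a (k+1))
    (harec : ∀ k, 1 ≤ k →
      a (k+2) = min ((n : ℝ) * a (k+1) / ((n : ℝ) - 1)) (Real.sqrt (A (k+1)) / (2 * n))) :
    ∀ k : ℕ, (5 / 2) * (n : ℝ) * Real.log n ≤ (k : ℝ) →
      A k ≥ ((k : ℝ) - (5 / 2) * (n : ℝ) * Real.log n)^2 / (36 * (n : ℝ)^2) := by
  intro k hk
  have hn' : (4 : ℝ) ≤ n := by exact_mod_cast hn
  have hthreshold : 0 < threshold n := by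
    have := log_pos (by linarith : (1 : ℝ) < n)
    unfold threshold; positivity
  obtain ⟨m, rfl⟩ : ∃ m, k = m + 1 :=
    Nat.exists_eq_succ_of_ne_zero (by rintro rfl; exact (hk.trans_lt' hthreshold).ne' Nat.cast_zero)
  have hφ₀ : lowerBound n 0 ≤ A 1 := by
    have := firstTerm_pos (by linarith : (0 : ℝ) < n)
    rw [hArec, hA0, ha1, zero_add]
    refine (min_le_left _ _).trans ?_
    rw [geomBound, pow_zero, mul_one]
    exact half_le_self this.le
  have hA := le_succ_of_subsolution (g := fun m => 2 * geomBound n m / (n - 1))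
    (ratio_pos (by linarith)).le (by positivity) hArec
    (fun k hk => by rw [harec k hk, ratio, mul_div_right_comm]) hφ₀
    (le_of_eq (by rw [ha2, ha1, geomBound, firstTerm]; ring))
    (fun m => by simp only [geomBound_succ]; ring)
    (sqrt_lowerBound_succ_le (by linarith)) (lowerBound_succ_le_add hn') m
  push_cast at hk ⊢
  exact (sq_div_le_lowerBound hn' hk).trans hA
end

section
/- Let k ≥ 1, let a_1^k, …, a_k^k be nonnegative reals with sum A_k > 0, let x_1, …, x_k ∈ ℝⁿ, and define ψ_k(y) = Σ_{i=1}^k a_i^k·(⟨Ax_i, y⟩ − (1/2)‖y‖₂² − 𝟙ᵀx_i) for y ∈ ℝᵐ, x̃_k = (1/A_k)·Σ_{i=1}^k a_i^k·x_i, y_k = A·x̃_k (which is the unique maximizer of ψ_k over ℝᵐ), and U_k(y) = (1/A_k)·ψ_k(y_k) − (1/2)‖y − y_k‖₂². Then for every y ∈ ℝᵐ, L(x̃_k, y) ≤ U_k(y). -/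
open Finset

/-- Upper bound on the Lagrangian: with `ψ_k(y) = Σᵢ aᵢᵏ(⟨Axᵢ,y⟩ − ½‖y‖² − 𝟙ᵀxᵢ)`,
`x̃_k = (1/A_k)·Σᵢ aᵢᵏ xᵢ`, `y_k = A x̃_k`, and
`U_k(y) = (1/A_k)ψ_k(y_k) − ½‖y − y_k‖²`, we have `L(x̃_k, y) ≤ U_k(y)` for all `y`. -/
theorem lagrangian_upper_bound {m n : ℕ} (hm : 0 < m) (hn : 0 < n)
    (A : Matrix (Fin m) (Fin n) ℝ)
    (L : (Fin n → ℝ) → (Fin m → ℝ) → ℝ)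
    (hL : ∀ x y, L x y =
      (∑ i, A.mulVec x i * y i) - (1/2) * ∑ i, (y i)^2 - ∑ j, x j)
    (k : ℕ) (hk : 1 ≤ k)
    (c : Fin k → ℝ) (hc : ∀ i, 0 ≤ c i)
    (Ak : ℝ) (hAk : Ak = ∑ i, c i) (hAk_pos : 0 < Ak)
    (x : Fin k → (Fin n → ℝ))
    (ψ : (Fin m → ℝ) → ℝ)
    (hψ : ∀ y, ψ y = ∑ i, c i *
      ((∑ i', A.mulVec (x i) i' * y i') - (1/2) * ∑ i', (y i')^2 - ∑ j, x i j))
    (xt : Fin n → ℝ) (hxt : xt = (1 / Ak) • ∑ i, c i • x i)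
    (yk : Fin m → ℝ) (hyk : yk = A.mulVec xt)
    (U : (Fin m → ℝ) → ℝ)
    (hU : ∀ y, U y = (1 / Ak) * ψ yk - (1/2) * ∑ i, (y i - yk i)^2) :
    ∀ y : Fin m → ℝ, L xt y ≤ U y := by
  intro y
  have hAk0 : Ak ≠ 0 := ne_of_gt hAk_pos
  -- pointwise formula for xt
  have hxtj : ∀ j, xt j = (1 / Ak) * ∑ i, c i * x i j := by
    intro j
    rw [hxt]
    simp [Finset.sum_apply, smul_eq_mul]
  -- weighted sum of the A xᵢ equals Ak · yk, componentwise
  have hA : ∀ i', ∑ i, c i * A.mulVec (x i) i' = Ak * yk i' := by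
    intro i'
    rw [hyk]
    simp only [Matrix.mulVec, dotProduct, hxtj]
    calc ∑ i, c i * ∑ j, A i' j * x i j
        = ∑ i, ∑ j, c i * (A i' j * x i j) := by
          exact Finset.sum_congr rfl fun i _ => by rw [Finset.mul_sum]
      _ = ∑ j, ∑ i, c i * (A i' j * x i j) := Finset.sum_comm
      _ = ∑ j, Ak * (A i' j * (1 / Ak * ∑ i, c i * x i j)) := by
          refine Finset.sum_congr rfl fun j _ => ?_
          have h1 : Ak * (A i' j * (1 / Ak * ∑ i, c i * x i j))
              = A i' j * ∑ i, c i * x i j := by field_simp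
          rw [h1, Finset.mul_sum]
          exact Finset.sum_congr rfl fun i _ => by ring
      _ = Ak * ∑ j, A i' j * (1 / Ak * ∑ i, c i * x i j) := by
          rw [Finset.mul_sum]
  -- weighted sum of the 𝟙ᵀxᵢ equals Ak · 𝟙ᵀxt
  have hS : ∑ i, c i * ∑ j, x i j = Ak * ∑ j, xt j := by
    calc ∑ i, c i * ∑ j, x i j
        = ∑ i, ∑ j, c i * x i j := by
          exact Finset.sum_congr rfl fun i _ => by rw [Finset.mul_sum]
      _ = ∑ j, ∑ i, c i * x i j := Finset.sum_comm
      _ = ∑ j, Ak * xt j := by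
          refine Finset.sum_congr rfl fun j _ => ?_
          rw [hxtj]; field_simp
      _ = Ak * ∑ j, xt j := by rw [Finset.mul_sum]
  -- weighted sum of the inner products
  have hT : ∑ i, c i * ∑ i', A.mulVec (x i) i' * yk i'
      = Ak * ∑ i', yk i' * yk i' := by
    calc ∑ i, c i * ∑ i', A.mulVec (x i) i' * yk i'
        = ∑ i, ∑ i', c i * A.mulVec (x i) i' * yk i' := by
          refine Finset.sum_congr rfl fun i _ => ?_
          rw [Finset.mul_sum]
          exact Finset.sum_congr rfl fun i' _ => by ring
      _ = ∑ i', ∑ i, c i * A.mulVec (x i) i' * yk i' := Finset.sum_comm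
      _ = ∑ i', Ak * (yk i' * yk i') := by
          refine Finset.sum_congr rfl fun i' _ => ?_
          rw [← Finset.sum_mul, hA]; ring
      _ = Ak * ∑ i', yk i' * yk i' := by rw [Finset.mul_sum]
  -- value of ψ at yk
  have hyk2 : ∑ i', yk i' * yk i' = ∑ i', (yk i')^2 :=
    Finset.sum_congr rfl fun i _ => by ring
  have hpsi : (1 / Ak) * ψ yk = (1/2) * ∑ i', (yk i')^2 - ∑ j, xt j := by
    rw [hψ]
    have expand : ∀ i : Fin k, c i *
        ((∑ i', A.mulVec (x i) i' * yk i') - (1/2) * ∑ i', (yk i')^2 - ∑ j, x i j)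
        = c i * (∑ i', A.mulVec (x i) i' * yk i')
          - c i * ((1/2) * ∑ i', (yk i')^2) - c i * (∑ j, x i j) := fun i => by ring
    simp only [expand]
    rw [Finset.sum_sub_distrib, Finset.sum_sub_distrib, hT, hS, hyk2]
    have hcsum : ∑ i, c i * ((1/2) * ∑ i', (yk i')^2)
        = Ak * ((1/2) * ∑ i', (yk i')^2) := by
      rw [← Finset.sum_mul, ← hAk]
    rw [hcsum]
    field_simp
    ring
  -- finish
  rw [hL, hU, hpsi, hyk]
  have hsqterm : ∀ i, (y i - A.mulVec xt i)^2
      = (y i)^2 - 2 * (y i * A.mulVec xt i) + (A.mulVec xt i)^2 := fun i => by ring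
  simp only [hsqterm, Finset.sum_add_distrib, Finset.sum_sub_distrib, Finset.mul_sum]
  have h1 : ∑ i, A.mulVec xt i * y i = ∑ i, y i * A.mulVec xt i :=
    Finset.sum_congr rfl fun i _ => by ring
  have h2 : ∑ i, 2 * (y i * A.mulVec xt i) = 2 * ∑ i, y i * A.mulVec xt i := by
    rw [Finset.mul_sum]
  have h3 : ∑ i, (1/2:ℝ) * (y i)^2 = (1/2) * ∑ i, (y i)^2 := by
    rw [Finset.mul_sum]
  have h4 : ∑ i, (1/2:ℝ) * (A.mulVec xt i)^2 = (1/2) * ∑ i, (A.mulVec xt i)^2 := by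
    rw [Finset.mul_sum]
  rw [h1]
  linarith [h2, h3, h4]
end

section
/- Let k ≥ 2, let a_1^k, …, a_k^k be nonnegative reals with sum A_k > 0 and a_1^{k−1}, …, a_{k−1}^{k−1} nonnegative reals with sum A_{k−1} > 0, let x_1, …, x_k ∈ ℝⁿ, and define ψ_k(y) = Σ_{i=1}^k a_i^k·(⟨Ax_i, y⟩ − (1/2)‖y‖₂² − 𝟙ᵀx_i) and ψ_{k−1}(y) = Σ_{i=1}^{k−1} a_i^{k−1}·(⟨Ax_i, y⟩ − (1/2)‖y‖₂² − 𝟙ᵀx_i), with maximizers y_k = (1/A_k)·Σ_{i=1}^k a_i^k·Ax_i and y_{k−1} = (1/A_{k−1})·Σ_{i=1}^{k−1} a_i^{k−1}·Ax_i. Then ψ_k(y_k) − ψ_{k−1}(y_{k−1}) ≤ a_k^k·(⟨y_k, Ax_k⟩ − (1/2)‖y_k‖₂² − 𝟙ᵀx_k) + Σ_{i=1}^{k−1} (a_i^k − a_i^{k−1})·(⟨y_k, Ax_i⟩ − (1/2)‖y_k‖₂² − 𝟙ᵀx_i) − (A_{k−1}/2)·‖y_k − y_{k−1}‖₂². -/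
open Finset

/-- Difference bound for the primal estimate sequence:
`ψ_k(y_k) − ψ_{k−1}(y_{k−1}) ≤ a_k^k(⟨y_k, Ax_k⟩ − ½‖y_k‖² − 𝟙ᵀx_k)
  + Σ_{i=1}^{k−1}(a_i^k − a_i^{k−1})(⟨y_k, Ax_i⟩ − ½‖y_k‖² − 𝟙ᵀx_i)
  − (A_{k−1}/2)‖y_k − y_{k−1}‖²`. -/
theorem psi_diff_bound {m n : ℕ} (hm : 0 < m) (hn : 0 < n)
    (A : Matrix (Fin m) (Fin n) ℝ)
    (k : ℕ) (hk : 2 ≤ k)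
    (c d : ℕ → ℝ)
    (hc : ∀ i ∈ Finset.Icc 1 k, 0 ≤ c i)
    (hd : ∀ i ∈ Finset.Icc 1 (k-1), 0 ≤ d i)
    (Ak Akm : ℝ)
    (hAk : Ak = ∑ i ∈ Finset.Icc 1 k, c i) (hAk_pos : 0 < Ak)
    (hAkm : Akm = ∑ i ∈ Finset.Icc 1 (k-1), d i) (hAkm_pos : 0 < Akm)
    (x : ℕ → (Fin n → ℝ))
    (ψk ψkm : (Fin m → ℝ) → ℝ)
    (hψk : ∀ y, ψk y = ∑ i ∈ Finset.Icc 1 k, c i *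
      ((∑ i', A.mulVec (x i) i' * y i') - (1/2) * ∑ i', (y i')^2 - ∑ j, x i j))
    (hψkm : ∀ y, ψkm y = ∑ i ∈ Finset.Icc 1 (k-1), d i *
      ((∑ i', A.mulVec (x i) i' * y i') - (1/2) * ∑ i', (y i')^2 - ∑ j, x i j))
    (yk ykm : Fin m → ℝ)
    (hyk : yk = (1 / Ak) • ∑ i ∈ Finset.Icc 1 k, c i • A.mulVec (x i))
    (hykm : ykm = (1 / Akm) • ∑ i ∈ Finset.Icc 1 (k-1), d i • A.mulVec (x i)) :
    ψk yk - ψkm ykm ≤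
      c k * ((∑ i', yk i' * A.mulVec (x k) i') - (1/2) * ∑ i', (yk i')^2 - ∑ j, x k j)
      + (∑ i ∈ Finset.Icc 1 (k-1), (c i - d i) *
          ((∑ i', yk i' * A.mulVec (x i) i') - (1/2) * ∑ i', (yk i')^2 - ∑ j, x i j))
      - (Akm / 2) * ∑ i', (yk i' - ykm i')^2 := by
  have hAkm_ne : Akm ≠ 0 := ne_of_gt hAkm_pos
  set T : ℕ → ℝ := fun i =>
    (∑ i', A.mulVec (x i) i' * yk i') - (1/2) * ∑ i', (yk i')^2 - ∑ j, x i j with hT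
  -- pointwise characterization of ykm
  have hykm' : ∀ i', Akm * ykm i' = ∑ i ∈ Finset.Icc 1 (k-1), d i * A.mulVec (x i) i' := by
    intro i'
    rw [hykm]
    simp only [Pi.smul_apply, Finset.sum_apply, smul_eq_mul]
    field_simp
  -- the bilinear form identity
  have key : ∀ y : Fin m → ℝ,
      ∑ i ∈ Finset.Icc 1 (k-1), d i * (∑ i', A.mulVec (x i) i' * y i')
        = Akm * ∑ i', ykm i' * y i' := by
    intro y
    calc ∑ i ∈ Finset.Icc 1 (k-1), d i * (∑ i', A.mulVec (x i) i' * y i')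
        = ∑ i ∈ Finset.Icc 1 (k-1), ∑ i', d i * A.mulVec (x i) i' * y i' := by
          simp [Finset.mul_sum, mul_assoc]
      _ = ∑ i', ∑ i ∈ Finset.Icc 1 (k-1), d i * A.mulVec (x i) i' * y i' :=
          Finset.sum_comm
      _ = ∑ i', (∑ i ∈ Finset.Icc 1 (k-1), d i * A.mulVec (x i) i') * y i' := by
          simp [Finset.sum_mul]
      _ = ∑ i', (Akm * ykm i') * y i' := by
          refine Finset.sum_congr rfl fun i' _ => ?_
          rw [hykm']
      _ = Akm * ∑ i', ykm i' * y i' := by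
          rw [Finset.mul_sum]
          exact Finset.sum_congr rfl fun i' _ => by ring
  -- quadratic form of ψkm
  have hψkm' : ∀ y, ψkm y = Akm * (∑ i', ykm i' * y i')
      - (Akm / 2) * (∑ i', (y i')^2)
      - ∑ i ∈ Finset.Icc 1 (k-1), d i * ∑ j, x i j := by
    intro y
    rw [hψkm y]
    have h1 : ∑ i ∈ Finset.Icc 1 (k-1), d i *
        ((∑ i', A.mulVec (x i) i' * y i') - (1/2) * ∑ i', (y i')^2 - ∑ j, x i j)
        = (∑ i ∈ Finset.Icc 1 (k-1), d i * (∑ i', A.mulVec (x i) i' * y i'))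
          - (∑ i ∈ Finset.Icc 1 (k-1), d i) * ((1/2) * ∑ i', (y i')^2)
          - ∑ i ∈ Finset.Icc 1 (k-1), d i * ∑ j, x i j := by
      simp [mul_sub, Finset.sum_sub_distrib, Finset.sum_mul]
    rw [h1, key y, ← hAkm]
    ring
  -- ‖yk - ykm‖² expansion
  have hQ : ∑ i', (yk i' - ykm i')^2
      = (∑ i', (yk i')^2) - 2 * (∑ i', ykm i' * yk i') + ∑ i', (ykm i')^2 := by
    have : ∀ i' : Fin m, (yk i' - ykm i')^2
        = (yk i')^2 - 2 * (ykm i' * yk i') + (ykm i')^2 := fun i' => by ring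
    simp only [this, Finset.sum_add_distrib, Finset.sum_sub_distrib, Finset.mul_sum]
  -- ψkm ykm = ψkm yk + (Akm/2) Q
  have hmax : ψkm ykm = ψkm yk + (Akm / 2) * ∑ i', (yk i' - ykm i')^2 := by
    rw [hψkm' ykm, hψkm' yk, hQ]
    have hsq : ∑ i', ykm i' * ykm i' = ∑ i', (ykm i')^2 := by
      refine Finset.sum_congr rfl fun i' _ => by ring
    rw [hsq]
    ring
  -- ψkm yk = Σ d T
  have hψkmyk : ψkm yk = ∑ i ∈ Finset.Icc 1 (k-1), d i * T i := hψkm yk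
  -- split ψk
  have hk1 : 1 ≤ k - 1 := by omega
  have hsplit : ψk yk = (∑ i ∈ Finset.Icc 1 (k-1), c i * T i) + c k * T k := by
    rw [hψk yk]
    have : Finset.Icc 1 k = Finset.Icc 1 ((k-1)+1) := by congr 1; omega
    have hkk : k - 1 + 1 = k := by omega
    rw [this, Finset.sum_Icc_succ_top (by omega : 1 ≤ (k-1)+1), hkk]
  -- order of multiplication in RHS inner products
  have hcomm : ∀ i : ℕ, (∑ i', yk i' * A.mulVec (x i) i') - (1/2) * ∑ i', (yk i')^2 - ∑ j, x i j
      = T i := by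
    intro i
    simp only [hT]
    congr 1
    congr 1
    exact Finset.sum_congr rfl fun i' _ => mul_comm _ _
  simp only [hcomm]
  have hsub : ∑ i ∈ Finset.Icc 1 (k-1), (c i - d i) * T i
      = (∑ i ∈ Finset.Icc 1 (k-1), c i * T i) - ∑ i ∈ Finset.Icc 1 (k-1), d i * T i := by
    simp [sub_mul, Finset.sum_sub_distrib]
  rw [hsub, hsplit, hmax, hψkmyk]
  apply le_of_eq
  ring
end

section
/- Define y₀ = Ax₀, y₁ = Ax₁ and, for k ≥ 2, y_k = (A_{k−1}/A_k)·y_{k−1} + (a_k/A_k)·Ax_k + ((n−1)·a_k/A_k)·A(x_k − x_{k−1}); define s₁ = 0 and, for k ≥ 2, s_k = s_{k−1} + ((n−1)·a_k − A_{k−1})·A(x_k − x_{k−1}); and define ȳ_k = y_k + (a_k/a_{k+1})·(y_k − y_{k−1}) for k ≥ 1. Then ȳ₁ = Ax₁ + (a₁/a₂)·A(x₁ − x₀), and for every k ≥ 2: ȳ_k = Ax_k + (1/A_k)·(1 − a_k²/(a_{k+1}·A_{k−1}))·s_k + ((n−1)·a_k²/(a_{k+1}·A_{k−1}))·A(x_k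 − x_{k−1}). -/
/-- Lazy update of the extrapolated dual variable: with `y₀ = Ax₀`, `y₁ = Ax₁`,
`y_k = (A_{k−1}/A_k)y_{k−1} + (a_k/A_k)Ax_k + ((n−1)a_k/A_k)A(x_k − x_{k−1})`, `s₁ = 0`,
`s_k = s_{k−1} + ((n−1)a_k − A_{k−1})A(x_k − x_{k−1})`, and
`ȳ_k = y_k + (a_k/a_{k+1})(y_k − y_{k−1})`, we have
`ȳ₁ = Ax₁ + (a₁/a₂)A(x₁ − x₀)` and, for `k ≥ 2`,
`ȳ_k = Ax_k + (1/A_k)(1 − a_k²/(a_{k+1}A_{k−1}))s_k + ((n−1)a_k²/(a_{k+1}A_{k−1}))A(x_k − x_{k−1})`. -/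
theorem lazy_extrapolated_dual (m n : ℕ) (hm : 0 < m) (hn : 2 ≤ n)
    (A : Matrix (Fin m) (Fin n) ℝ)
    (a : ℕ → ℝ) (ha_pos : ∀ k, 1 ≤ k → 0 < a k)
    (Aseq : ℕ → ℝ) (hA0 : Aseq 0 = 0) (hArec : ∀ k, Aseq (k+1) = Aseq k + a (k+1))
    (x : ℕ → (Fin n → ℝ)) (y s yb : ℕ → (Fin m → ℝ))
    (hy0 : y 0 = A.mulVec (x 0))
    (hy1 : y 1 = A.mulVec (x 1))
    (hy : ∀ k, 2 ≤ k → y k = (Aseq (k-1) / Aseq k) • y (k-1)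
      + (a k / Aseq k) • A.mulVec (x k)
      + (((n : ℝ) - 1) * a k / Aseq k) • A.mulVec (x k - x (k-1)))
    (hs1 : s 1 = 0)
    (hs : ∀ k, 2 ≤ k →
      s k = s (k-1) + (((n : ℝ) - 1) * a k - Aseq (k-1)) • A.mulVec (x k - x (k-1)))
    (hyb : ∀ k, 1 ≤ k → yb k = y k + (a k / a (k+1)) • (y k - y (k-1))) :
    yb 1 = A.mulVec (x 1) + (a 1 / a 2) • A.mulVec (x 1 - x 0) ∧
    ∀ k, 2 ≤ k → yb k = A.mulVec (x k)
      + ((1 / Aseq k) * (1 - (a k)^2 / (a (k+1) * Aseq (k-1)))) • s k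
      + (((n : ℝ) - 1) * (a k)^2 / (a (k+1) * Aseq (k-1))) • A.mulVec (x k - x (k-1)) := by
  -- positivity of partial sums
  have hApos : ∀ k, 0 < Aseq (k+1) := by
    intro k
    induction k with
    | zero => rw [hArec 0, hA0, zero_add]; exact ha_pos 1 le_rfl
    | succ j ih =>
      rw [hArec (j+1)]
      exact add_pos ih (ha_pos (j+2) (by omega))
  -- key invariant : y (k+1) = A x (k+1) + (1/A_{k+1}) s (k+1)
  have key : ∀ k, y (k+1) = A.mulVec (x (k+1)) + (Aseq (k+1))⁻¹ • s (k+1) := by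
    intro k
    induction k with
    | zero => simp [hy1, hs1]
    | succ j ih =>
      have h2 : (2:ℕ) ≤ j+2 := by omega
      have hyk := hy (j+2) h2
      have hsk := hs (j+2) h2
      have e : j + 2 - 1 = j + 1 := rfl
      rw [e] at hyk hsk
      rw [hyk, ih, hsk]
      have h1 : Aseq (j+1) ≠ 0 := (hApos j).ne'
      have h2' : Aseq (j+2) ≠ 0 := (hApos (j+1)).ne'
      have hrec : Aseq (j+2) = Aseq (j+1) + a (j+2) := hArec (j+1)
      rw [hrec] at h2' ⊢
      funext i
      simp only [Pi.add_apply, Pi.smul_apply, smul_eq_mul, Matrix.mulVec_sub,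
        Pi.sub_apply]
      field_simp
      ring
  have ha2 : (0:ℝ) < a 2 := ha_pos 2 (by omega)
  constructor
  · rw [hyb 1 le_rfl, hy1, hy0, Matrix.mulVec_sub]
  · intro k hk
    obtain ⟨j, rfl⟩ : ∃ j, k = j + 2 := ⟨k - 2, by omega⟩
    have hsk := hs (j+2) hk
    have e : j + 2 - 1 = j + 1 := rfl
    rw [e] at hsk ⊢
    rw [hyb (j+2) (by omega), key (j+1), e, key j, hsk]
    have h1 : Aseq (j+1) ≠ 0 := (hApos j).ne'
    have h2' : Aseq (j+2) ≠ 0 := (hApos (j+1)).ne'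
    have h3 : a (j+3) ≠ 0 := (ha_pos (j+3) (by omega)).ne'
    have hrec : Aseq (j+2) = Aseq (j+1) + a (j+2) := hArec (j+1)
    rw [hrec] at h2' ⊢
    funext i
    simp only [Pi.add_apply, Pi.smul_apply, smul_eq_mul, Matrix.mulVec_sub,
      Pi.sub_apply]
    field_simp
    ring
end

section
/- For every x ∈ ℝⁿ₊, the point x̄ = x − R(x) (equivalently, the minimizer over u ∈ ℝⁿ₊ of ⟨∇f(x), u − x⟩ + (1/2)‖u − x‖_Λ²) satisfies f(x̄) − f(x⋆) ≤ (n−1)·‖R(x)‖_Λ² + (n+1)·‖R(x)‖_Λ·‖x − x⋆‖_Λ, where x⋆ is any minimizer of f over ℝⁿ₊. -/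
/-!
Write `g = ∇f(x)` and `Λ_j = ‖A_{:j}‖²`. Since `f` is a quadratic, `f(y) - f(x)` is exactly
`⟨g, y - x⟩ + ½‖A(y - x)‖²`; expanding both `f(x̄)` and `f(x⋆)` around `x` and dropping the
nonnegative term `½‖A(x⋆ - x)‖²` gives `f(x̄) - f(x⋆) ≤ ⟨g, x̄ - x⋆⟩ + ½‖AR‖²`. Coordinatewise,
`x̄_j` is the projection of `x_j - g_j/Λ_j` onto `[0, ∞)`, so `g_j (x̄_j - x⋆_j) ≤ Λ_j R_j (x̄_j - x⋆_j)`
for every `x⋆_j ≥ 0`, and Cauchy–Schwarz on the rows of `A` gives `‖AR‖² ≤ n‖R‖_Λ²`. With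
`x̄ = x - R` and the weighted Cauchy–Schwarz inequality,
`f(x̄) - f(x⋆) ≤ ‖R‖_Λ‖x - x⋆‖_Λ + (n/2 - 1)‖R‖_Λ²`.
-/

open Finset Matrix

lemma sum_mul_mul_le_sqrt_mul_sqrt {ι : Type*} (s : Finset ι) {w : ι → ℝ} (hw : ∀ i ∈ s, 0 ≤ w i)
    (a b : ι → ℝ) :
    ∑ i ∈ s, w i * a i * b i ≤
      √(∑ i ∈ s, w i * a i ^ 2) * √(∑ i ∈ s, w i * b i ^ 2) := by
  have hsq : (∑ i ∈ s, w i * a i * b i) ^ 2 ≤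
      (∑ i ∈ s, w i * a i ^ 2) * ∑ i ∈ s, w i * b i ^ 2 :=
    sum_sq_le_sum_mul_sum_of_sq_le_mul s (fun i hi => mul_nonneg (hw i hi) (sq_nonneg _))
      (fun i hi => mul_nonneg (hw i hi) (sq_nonneg _)) (fun i _ => le_of_eq (by ring))
  exact (Real.le_sqrt_of_sq_le hsq).trans_eq
    (Real.sqrt_mul (sum_nonneg fun i hi => mul_nonneg (hw i hi) (sq_nonneg _)) _)

lemma prox_nonneg_variational_ineq {lam g x z : ℝ} (hlam : 0 < lam) (hz : 0 ≤ z) :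
    g * (max (x - g / lam) 0 - z) ≤
      lam * (x - max (x - g / lam) 0) * (max (x - g / lam) 0 - z) := by
  rcases le_total 0 (x - g / lam) with h | h
  · rw [max_eq_left h]
    apply le_of_eq
    field_simp
    ring
  · rw [max_eq_right h]
    have : lam * x ≤ g := by rwa [sub_nonpos, le_div_iff₀ hlam, mul_comm] at h
    nlinarith

section Quadratic

variable {ι κ : Type*} [Fintype ι] [Fintype κ] (A : Matrix ι κ ℝ)

noncomputable def quadObj (x : κ → ℝ) : ℝ := (1 / 2) * ∑ i, (A *ᵥ x) i ^ 2 - ∑ j, x j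

def quadGrad (x : κ → ℝ) (j : κ) : ℝ := (∑ i, A i j * (A *ᵥ x) i) - 1

lemma sum_quadGrad_mul (x d : κ → ℝ) :
    ∑ j, quadGrad A x j * d j = ∑ i, (A *ᵥ x) i * (A *ᵥ d) i - ∑ j, d j := by
  simp only [quadGrad, sub_mul, one_mul, sum_sub_distrib, sum_mul, mulVec, dotProduct, mul_sum]
  rw [sum_comm]
  simp only [mul_comm, mul_left_comm]

lemma quadObj_sub (x y : κ → ℝ) :
    quadObj A y - quadObj A x =
      ∑ j, quadGrad A x j * (y j - x j) + (1 / 2) * ∑ i, (A *ᵥ (y - x)) i ^ 2 := by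
  have hy : A *ᵥ y = A *ᵥ x + A *ᵥ (y - x) := by rw [← mulVec_add, add_sub_cancel]
  have hgrad := sum_quadGrad_mul A x (y - x)
  simp only [Pi.sub_apply] at hgrad
  rw [hgrad, quadObj, quadObj, hy]
  simp only [Pi.add_apply, add_sq, mul_assoc, sum_add_distrib, ← mul_sum, sum_sub_distrib]
  ring

lemma quadObj_sub_le (x y z : κ → ℝ) :
    quadObj A y - quadObj A z ≤
      ∑ j, quadGrad A x j * (y j - z j) + (1 / 2) * ∑ i, (A *ᵥ (y - x)) i ^ 2 := by
  have hy := quadObj_sub A x y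
  have hz := quadObj_sub A x z
  have hz_sq : 0 ≤ ∑ i, (A *ᵥ (z - x)) i ^ 2 := sum_nonneg fun i _ => sq_nonneg _
  have hsplit : ∑ j, quadGrad A x j * (y j - z j) =
      ∑ j, quadGrad A x j * (y j - x j) - ∑ j, quadGrad A x j * (z j - x j) := by
    rw [← sum_sub_distrib]; congr! 1 with j; ring
  linarith

lemma sum_sq_mulVec_le_card_mul (v : κ → ℝ) :
    ∑ i, (A *ᵥ v) i ^ 2 ≤ Fintype.card κ * ∑ j, (∑ i, A i j ^ 2) * v j ^ 2 := by
  calc ∑ i, (A *ᵥ v) i ^ 2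
      ≤ ∑ i, (Fintype.card κ : ℝ) * ∑ j, (A i j * v j) ^ 2 :=
        sum_le_sum fun i _ => sq_sum_le_card_mul_sum_sq
    _ = Fintype.card κ * ∑ j, (∑ i, A i j ^ 2) * v j ^ 2 := by
        simp only [← mul_sum, sum_mul, mul_pow]
        rw [sum_comm]

theorem quadObj_prox_sub_le (hΛ : ∀ j, 0 < ∑ i, A i j ^ 2) {x z R : κ → ℝ} (hz : ∀ j, 0 ≤ z j)
    (hR : ∀ j, R j = x j - max (x j - quadGrad A x j / ∑ i, A i j ^ 2) 0) :
    quadObj A (x - R) - quadObj A z ≤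
      √(∑ j, (∑ i, A i j ^ 2) * R j ^ 2) * √(∑ j, (∑ i, A i j ^ 2) * (x j - z j) ^ 2)
        + (Fintype.card κ / 2 - 1) * ∑ j, (∑ i, A i j ^ 2) * R j ^ 2 := by
  set S := ∑ j, (∑ i, A i j ^ 2) * R j ^ 2
  have hopt : ∀ j, quadGrad A x j * ((x - R) j - z j) ≤
      (∑ i, A i j ^ 2) * R j * ((x - R) j - z j) := by
    intro j
    have hxR : (x - R) j = max (x j - quadGrad A x j / ∑ i, A i j ^ 2) 0 := by
      rw [Pi.sub_apply, hR j, sub_sub_cancel]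
    rw [hxR, hR j]
    exact prox_nonneg_variational_ineq (hΛ j) (hz j)
  have hsmooth : ∑ i, (A *ᵥ (x - R - x)) i ^ 2 ≤ Fintype.card κ * S := by
    simpa only [sub_sub_cancel_left, Pi.neg_apply, neg_sq] using sum_sq_mulVec_le_card_mul A (-R)
  have hCS := sum_mul_mul_le_sqrt_mul_sqrt univ (fun j _ => (hΛ j).le) R (fun j => x j - z j)
  have hsplit : ∀ j, (∑ i, A i j ^ 2) * R j * ((x - R) j - z j) =
      (∑ i, A i j ^ 2) * R j * (x j - z j) - (∑ i, A i j ^ 2) * R j ^ 2 := fun j => by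
    rw [Pi.sub_apply]; ring
  calc quadObj A (x - R) - quadObj A z
      ≤ ∑ j, quadGrad A x j * ((x - R) j - z j) + (1 / 2) * ∑ i, (A *ᵥ (x - R - x)) i ^ 2 :=
        quadObj_sub_le A x _ z
    _ ≤ ∑ j, (∑ i, A i j ^ 2) * R j * ((x - R) j - z j) + (1 / 2) * (Fintype.card κ * S) :=
        add_le_add (sum_le_sum fun j _ => hopt j) (by gcongr)
    _ = ∑ j, (∑ i, A i j ^ 2) * R j * (x j - z j) + (Fintype.card κ / 2 - 1) * S := by
        rw [sum_congr rfl fun j _ => hsplit j, sum_sub_distrib]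
        ring
    _ ≤ _ := by linarith

end Quadratic

theorem prox_step_bound_general {m n : ℕ}
    (A : Matrix (Fin m) (Fin n) ℝ)
    (hA_cols : ∀ j, ∃ i, A i j ≠ 0)
    (f : (Fin n → ℝ) → ℝ)
    (hf : ∀ x, f x = (1/2) * ∑ i, (A.mulVec x i)^2 - ∑ j, x j)
    (xstar : Fin n → ℝ)
    (hxs_nonneg : ∀ j, 0 ≤ xstar j)
    (x : Fin n → ℝ)
    (R : Fin n → ℝ)
    (hR : ∀ j, R j = x j -
      max (x j - ((∑ i, A i j * A.mulVec x i) - 1) / (∑ i, (A i j)^2)) 0)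
    (xbar : Fin n → ℝ) (hxbar : xbar = x - R) :
    f xbar - f xstar ≤
      ((n : ℝ) - 1) * (∑ j, (∑ i, (A i j)^2) * (R j)^2)
      + ((n : ℝ) + 1) * Real.sqrt (∑ j, (∑ i, (A i j)^2) * (R j)^2)
        * Real.sqrt (∑ j, (∑ i, (A i j)^2) * (x j - xstar j)^2) := by
  have hΛ : ∀ j, 0 < ∑ i, A i j ^ 2 := fun j =>
    let ⟨i, hi⟩ := hA_cols j
    sum_pos' (fun i _ => sq_nonneg _) ⟨i, mem_univ i, by positivity⟩
  have hgap := quadObj_prox_sub_le A hΛ hxs_nonneg hR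
  rw [Fintype.card_fin] at hgap
  rw [show f = quadObj A from funext hf, hxbar]
  have hn0 : (0 : ℝ) ≤ n := n.cast_nonneg
  have hS : 0 ≤ ∑ j, (∑ i, A i j ^ 2) * R j ^ 2 := sum_nonneg fun j _ => by positivity
  have hST : 0 ≤ √(∑ j, (∑ i, A i j ^ 2) * R j ^ 2) *
      √(∑ j, (∑ i, A i j ^ 2) * (x j - xstar j) ^ 2) := by positivity
  nlinarith [mul_nonneg hn0 hS, mul_nonneg hn0 hST]

/-- For every `x ∈ ℝⁿ₊`, the point `x̄ = x − R(x)` satisfies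
`f(x̄) − f(x⋆) ≤ (n−1)‖R(x)‖_Λ² + (n+1)‖R(x)‖_Λ·‖x − x⋆‖_Λ`, where `x⋆` is any minimizer of
`f` over `ℝⁿ₊`, `R(x) = x − max(x − Λ⁻¹∇f(x), 0)` and `‖v‖_Λ = √(Σ_j ‖A_{:j}‖₂² v_j²)`. -/
theorem prox_step_bound {m n : ℕ} (hm : 0 < m) (hn : 0 < n)
    (A : Matrix (Fin m) (Fin n) ℝ)
    (hA_nonneg : ∀ i j, 0 ≤ A i j)
    (hA_cols : ∀ j, ∃ i, A i j ≠ 0)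
    (f : (Fin n → ℝ) → ℝ)
    (hf : ∀ x, f x = (1/2) * ∑ i, (A.mulVec x i)^2 - ∑ j, x j)
    (xstar : Fin n → ℝ)
    (hxs_nonneg : ∀ j, 0 ≤ xstar j)
    (hxs_min : ∀ x : Fin n → ℝ, (∀ j, 0 ≤ x j) → f xstar ≤ f x)
    (x : Fin n → ℝ) (hx : ∀ j, 0 ≤ x j)
    (R : Fin n → ℝ)
    (hR : ∀ j, R j = x j -
      max (x j - ((∑ i, A i j * A.mulVec x i) - 1) / (∑ i, (A i j)^2)) 0)
    (xbar : Fin n → ℝ) (hxbar : xbar = x - R) :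
    f xbar - f xstar ≤
      ((n : ℝ) - 1) * (∑ j, (∑ i, (A i j)^2) * (R j)^2)
      + ((n : ℝ) + 1) * Real.sqrt (∑ j, (∑ i, (A i j)^2) * (R j)^2)
        * Real.sqrt (∑ j, (∑ i, (A i j)^2) * (x j - xstar j)^2) :=
  prox_step_bound_general A hA_cols f hf xstar hxs_nonneg x R hR xbar hxbar
end
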